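/- arXiv:2407.17639 — 4 statements merged into one kernel-verified Lean document; each statement's English description precedes it below -/
import Mathlib

section
/- For a solution of the multigroup aNIMFA system with monotone responses (f_{br,ij} non-decreasing and f_{cr,ij} non-increasing in each argument), every link density satisfies limsup_{t→∞} z_{ij}(t) ≤ z_{ij}^{DFE} = ξ_{ij} f_{cr,ij}(0,0,0) / (ζ_{ij} f_{br,ij}(0,0,0) + ξ_{ij} f_{cr,ij}(0,0,0)), provided the denominator is positive. -/
open Set Filter

/-- With monotone functional responses, every link density of the multigroup aNIMFA
system satisfies `limsup_{t→∞} z_{ij}(t) ≤ z_{ij}^{DFE}`. -/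
theorem multigroup_aNIMFA_limsup_link_density
    (n : ℕ)
    (ζ ξ : Fin n → Fin n → ℝ)
    (fbr fcr : Fin n → Fin n → ℝ → ℝ → ℝ → ℝ)
    (hζ : ∀ i j, 0 < ζ i j) (hξ : ∀ i j, 0 < ξ i j)
    (hfbr_nonneg : ∀ i j, ∀ a ∈ Icc (0:ℝ) 1, ∀ b ∈ Icc (0:ℝ) 1, ∀ c ∈ Icc (0:ℝ) 1,
      0 ≤ fbr i j a b c)
    (hfcr_nonneg : ∀ i j, ∀ a ∈ Icc (0:ℝ) 1, ∀ b ∈ Icc (0:ℝ) 1, ∀ c ∈ Icc (0:ℝ) 1,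
      0 ≤ fcr i j a b c)
    -- f_br non-decreasing and f_cr non-increasing in each argument on [0,1]³
    (hfbr_mono : ∀ i j, ∀ a ∈ Icc (0:ℝ) 1, ∀ b ∈ Icc (0:ℝ) 1, ∀ c ∈ Icc (0:ℝ) 1,
      ∀ a' ∈ Icc (0:ℝ) 1, ∀ b' ∈ Icc (0:ℝ) 1, ∀ c' ∈ Icc (0:ℝ) 1,
      a ≤ a' → b ≤ b' → c ≤ c' → fbr i j a b c ≤ fbr i j a' b' c')
    (hfcr_anti : ∀ i j, ∀ a ∈ Icc (0:ℝ) 1, ∀ b ∈ Icc (0:ℝ) 1, ∀ c ∈ Icc (0:ℝ) 1,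
      ∀ a' ∈ Icc (0:ℝ) 1, ∀ b' ∈ Icc (0:ℝ) 1, ∀ c' ∈ Icc (0:ℝ) 1,
      a ≤ a' → b ≤ b' → c ≤ c' → fcr i j a' b' c' ≤ fcr i j a b c)
    (y : ℝ → Fin n → ℝ) (z : ℝ → Fin n → Fin n → ℝ)
    (hyIcc : ∀ t ≥ (0:ℝ), ∀ i, y t i ∈ Icc (0:ℝ) 1)
    (hzIcc : ∀ t ≥ (0:ℝ), ∀ i j, z t i j ∈ Icc (0:ℝ) 1)
    (hz : ∀ t ≥ (0:ℝ), ∀ i j, HasDerivAt (fun s => z s i j)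
      (-ζ i j * z t i j * fbr i j (y t i) (y t j) ((n : ℝ)⁻¹ * ∑ k, y t k)
        + ξ i j * (1 - z t i j) * fcr i j (y t i) (y t j) ((n : ℝ)⁻¹ * ∑ k, y t k)) t)
    (hden : ∀ i j, 0 < ζ i j * fbr i j 0 0 0 + ξ i j * fcr i j 0 0 0) :
    ∀ i j, Filter.limsup (fun t : ℝ => z t i j) Filter.atTop
      ≤ ξ i j * fcr i j 0 0 0 / (ζ i j * fbr i j 0 0 0 + ξ i j * fcr i j 0 0 0) := by
  intro i j
  have hn : (0:ℝ) < n := by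
    exact_mod_cast Nat.pos_of_ne_zero (fun h => by subst h; exact i.elim0)
  set F : ℝ := fbr i j 0 0 0 with hF
  set C : ℝ := fcr i j 0 0 0 with hC
  set K : ℝ := ζ i j * F + ξ i j * C with hK
  set B : ℝ := ξ i j * C with hB
  have hK0 : 0 < K := hden i j
  have h01 : (0:ℝ) ∈ Icc (0:ℝ) 1 := ⟨le_refl 0, zero_le_one⟩
  have hF0 : 0 ≤ F := hfbr_nonneg i j 0 h01 0 h01 0 h01
  have hC0 : 0 ≤ C := hfcr_nonneg i j 0 h01 0 h01 0 h01
  set zs : ℝ := B / K with hzs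
  clear_value F C K B zs
  -- mean value is in [0,1]
  have hmean : ∀ t ≥ (0:ℝ), ((n : ℝ)⁻¹ * ∑ k, y t k) ∈ Icc (0:ℝ) 1 := by
    intro t ht
    constructor
    · apply mul_nonneg (by positivity)
      exact Finset.sum_nonneg fun k _ => (hyIcc t ht k).1
    · rw [inv_mul_le_iff₀ hn, mul_one]
      calc (∑ k, y t k) ≤ ∑ _k : Fin n, (1:ℝ) :=
            Finset.sum_le_sum fun k _ => (hyIcc t ht k).2
        _ = n := by simp
  -- differential inequality: z' ≤ B - K * z
  have hineq : ∀ t ≥ (0:ℝ),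
      (-ζ i j * z t i j * fbr i j (y t i) (y t j) ((n : ℝ)⁻¹ * ∑ k, y t k)
        + ξ i j * (1 - z t i j) * fcr i j (y t i) (y t j) ((n : ℝ)⁻¹ * ∑ k, y t k))
      ≤ B - K * z t i j := by
    intro t ht
    have hyi := hyIcc t ht i
    have hyj := hyIcc t ht j
    have hyb := hmean t ht
    have hzm := hzIcc t ht i j
    have hbr : F ≤ fbr i j (y t i) (y t j) ((n : ℝ)⁻¹ * ∑ k, y t k) :=
      hF ▸ hfbr_mono i j 0 h01 0 h01 0 h01 _ hyi _ hyj _ hyb hyi.1 hyj.1 hyb.1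
    have hcr : fcr i j (y t i) (y t j) ((n : ℝ)⁻¹ * ∑ k, y t k) ≤ C :=
      hC ▸ hfcr_anti i j 0 h01 0 h01 0 h01 _ hyi _ hyj _ hyb hyi.1 hyj.1 hyb.1
    have hcr0 : 0 ≤ fcr i j (y t i) (y t j) ((n : ℝ)⁻¹ * ∑ k, y t k) :=
      hfcr_nonneg i j _ hyi _ hyj _ hyb
    have hζp := hζ i j
    have hξp := hξ i j
    have hz0 := hzm.1
    have hz1 := hzm.2
    rw [hK, hB]
    nlinarith [mul_nonneg hz0 (sub_nonneg.2 hbr), mul_nonneg (sub_nonneg.2 hz1) (sub_nonneg.2 hcr),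
      mul_pos hζp (lt_of_lt_of_le (by linarith : (0:ℝ) < 1) (le_refl 1))]
  -- the auxiliary function h is antitone on [0,∞)
  set h : ℝ → ℝ := fun t => (z t i j - zs) * Real.exp (K * t) with hh
  have hderiv : ∀ t ∈ Ici (0:ℝ), HasDerivAt h
      (((-ζ i j * z t i j * fbr i j (y t i) (y t j) ((n : ℝ)⁻¹ * ∑ k, y t k)
        + ξ i j * (1 - z t i j) * fcr i j (y t i) (y t j) ((n : ℝ)⁻¹ * ∑ k, y t k))
        + K * (z t i j - zs)) * Real.exp (K * t)) t := by
    intro t ht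
    have hz' := (hz t ht i j).sub_const zs
    have he : HasDerivAt (fun s => Real.exp (K * s)) (Real.exp (K * t) * K) t :=
      by simpa using ((hasDerivAt_id t).const_mul K).exp
    have : HasDerivAt (fun s => (z s i j - zs) * Real.exp (K * s)) _ t := hz'.mul he
    convert this using 1
    ring
  have hanti : AntitoneOn h (Ici (0:ℝ)) := by
    apply antitoneOn_of_deriv_nonpos (convex_Ici 0)
    · exact fun t ht => (hderiv t ht).continuousAt.continuousWithinAt
    · intro t ht
      rw [interior_Ici] at ht
      exact ((hderiv t (mem_Ici.2 (le_of_lt ht))).differentiableAt).differentiableWithinAt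
    · intro t ht
      rw [interior_Ici] at ht
      rw [(hderiv t (mem_Ici.2 (le_of_lt ht))).deriv]
      apply mul_nonpos_of_nonpos_of_nonneg _ (Real.exp_pos _).le
      have h1 := hineq t (le_of_lt ht)
      have hKzs : K * zs = B := by
        rw [hzs]; field_simp
      have h4 : K * (z t i j - zs) = K * z t i j - B := by rw [mul_sub, hKzs]
      linarith
  -- z t ≤ zs + M * exp(-(K*t)) for t ≥ 0
  set M : ℝ := max (z 0 i j - zs) 0 with hM
  have hMz : 0 ≤ M := le_max_right _ _
  have hbound : ∀ t ≥ (0:ℝ), z t i j ≤ zs + M * Real.exp (-(K * t)) := by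
    intro t ht
    have := hanti (self_mem_Ici) ht ht
    have h0 : h 0 = z 0 i j - zs := by simp [hh]
    have hht : h t = (z t i j - zs) * Real.exp (K * t) := rfl
    rw [h0, hht] at this
    have hexp : (0:ℝ) < Real.exp (K * t) := Real.exp_pos _
    have h2 : (z t i j - zs) * Real.exp (K * t) ≤ M := le_trans this (le_max_left _ _)
    have h3 : z t i j - zs ≤ M * Real.exp (-(K * t)) := by
      rw [Real.exp_neg, ← div_eq_mul_inv, le_div_iff₀ hexp]
      exact h2
    linarith
  -- conclude about the limsup
  have htend : Tendsto (fun t : ℝ => zs + M * Real.exp (-(K * t))) atTop (nhds zs) := by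
    have : Tendsto (fun t : ℝ => Real.exp (-(K * t))) atTop (nhds 0) := by
      apply Real.tendsto_exp_atBot.comp
      exact tendsto_neg_atBot_iff.2 (Tendsto.const_mul_atTop hK0 tendsto_id)
    have := this.const_mul M
    simpa using (tendsto_const_nhds.add this)
  have hle : (fun t : ℝ => z t i j) ≤ᶠ[atTop] fun t => zs + M * Real.exp (-(K * t)) :=
    (eventually_ge_atTop (0:ℝ)).mono fun t ht => hbound t ht
  have hcb : IsCoboundedUnder (· ≤ ·) atTop (fun t : ℝ => z t i j) :=
    isCoboundedUnder_le_of_eventually_le atTop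
      ((eventually_ge_atTop (0:ℝ)).mono fun t ht => (hzIcc t ht i j).1)
  have hbd : IsBoundedUnder (· ≤ ·) atTop (fun t : ℝ => zs + M * Real.exp (-(K * t))) :=
    htend.isBoundedUnder_le
  calc Filter.limsup (fun t : ℝ => z t i j) atTop
      ≤ Filter.limsup (fun t : ℝ => zs + M * Real.exp (-(K * t))) atTop :=
        limsup_le_limsup hle hcb hbd
    _ = zs := htend.limsup_eq
end

section
/- Let M be an entrywise non-negative n×n real matrix and V = diag(δ_1,…,δ_n) with δ_i > 0. If the spectral radius of M V^{-1} is strictly less than 1, then every eigenvalue of M − V has strictly negative real part. -/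
open Matrix

attribute [local instance] Matrix.linftyOpNormedRing Matrix.linftyOpNormedAlgebra

/-- (van den Driessche–Watmough) If `M ≥ 0` entrywise and `V = diag(δ)` with `δ > 0`,
and the spectral radius of `M V⁻¹` is less than `1`, then every eigenvalue of `M - V`
has strictly negative real part. -/
theorem eigenvalues_neg_of_spectralRadius_lt_one
    (n : ℕ) (M : Matrix (Fin n) (Fin n) ℝ) (δ : Fin n → ℝ)
    (hM : ∀ i j, 0 ≤ M i j) (hδ : ∀ i, 0 < δ i)
    (hρ : ∀ μ ∈ spectrum ℂ ((M * (Matrix.diagonal δ)⁻¹).map (Complex.ofReal)),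
      ‖μ‖ < 1) :
    ∀ μ ∈ spectrum ℂ ((M - Matrix.diagonal δ).map (Complex.ofReal)), μ.re < 0 := by
  classical
  intro μ hμ
  by_contra hre
  push_neg at hre
  rcases isEmpty_or_nonempty (Fin n) with hemp | hne
  · haveI : Subsingleton (Matrix (Fin n) (Fin n) ℂ) := by
      constructor; intro a b; ext i j; exact hemp.elim i
    exact (spectrum.mem_iff.mp hμ) (isUnit_of_subsingleton _)
  haveI : CompleteSpace (Matrix (Fin n) (Fin n) ℂ) :=
    FiniteDimensional.complete ℂ _
  set P : Matrix (Fin n) (Fin n) ℝ := M * (Matrix.diagonal δ)⁻¹ with hPdef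
  set B : Matrix (Fin n) (Fin n) ℂ := P.map Complex.ofReal with hBdef
  have hdiaginv : (Matrix.diagonal δ)⁻¹ = Matrix.diagonal (fun i => (δ i)⁻¹) := by
    apply Matrix.inv_eq_right_inv
    rw [Matrix.diagonal_mul_diagonal]
    have : (fun i => δ i * (δ i)⁻¹) = fun _ => (1 : ℝ) :=
      funext fun i => mul_inv_cancel₀ (hδ i).ne'
    rw [this, Matrix.diagonal_one]
  have hPentry : ∀ i j, P i j = M i j * (δ j)⁻¹ := by
    intro i j; rw [hPdef, hdiaginv, Matrix.mul_diagonal]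
  set d : Fin n → ℂ := fun i => μ + (δ i : ℂ) with hddef
  have hdnorm : ∀ i, δ i ≤ ‖d i‖ := by
    intro i
    calc δ i ≤ μ.re + δ i := by linarith
    _ = (d i).re := by simp [hddef]
    _ ≤ ‖d i‖ := Complex.re_le_norm _
  have hd0 : ∀ i, d i ≠ 0 := fun i h => by
    have := hdnorm i; rw [h] at this; simp at this; exact absurd this (not_le.mpr (hδ i))
  set C : Matrix (Fin n) (Fin n) ℂ :=
    M.map Complex.ofReal * Matrix.diagonal (fun i => (d i)⁻¹) with hCdef
  have hCentry : ∀ i j, C i j = (M i j : ℂ) * (d j)⁻¹ := by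
    intro i j; rw [hCdef, Matrix.mul_diagonal]; rfl
  have hCP : ∀ i j, ‖C i j‖ ≤ P i j := by
    intro i j
    rw [hCentry, hPentry, norm_mul, norm_inv, Complex.norm_real,
      Real.norm_of_nonneg (hM i j)]
    gcongr
    · exact hM i j
    · exact hδ j
    · exact hdnorm j
  have hpow : ∀ k i j, ‖(C ^ k) i j‖ ≤ (P ^ k) i j := by
    intro k
    induction k with
    | zero =>
      intro i j
      by_cases h : i = j <;> simp [pow_zero, Matrix.one_apply, h]
    | succ k ih =>
      intro i j
      rw [pow_succ, pow_succ, Matrix.mul_apply, Matrix.mul_apply]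
      calc ‖∑ l, (C ^ k) i l * C l j‖ ≤ ∑ l, ‖(C ^ k) i l‖ * ‖C l j‖ := by
            refine (norm_sum_le _ _).trans ?_
            exact Finset.sum_le_sum fun l _ => (norm_mul _ _).le
      _ ≤ ∑ l, (P ^ k) i l * P l j := by
            refine Finset.sum_le_sum fun l _ => ?_
            exact mul_le_mul (ih i l) (hCP l j) (norm_nonneg _)
              ((norm_nonneg _).trans (ih i l))
  have hBk : ∀ k, B ^ k = (P ^ k).map Complex.ofReal := by
    intro k
    have : B = Complex.ofRealHom.mapMatrix P := rfl
    rw [this, ← map_pow, RingHom.mapMatrix_apply]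
    rfl
  have hnorm : ∀ k, ‖C ^ k‖₊ ≤ ‖B ^ k‖₊ := by
    intro k
    rw [Matrix.linfty_opNNNorm_def, Matrix.linfty_opNNNorm_def]
    refine Finset.sup_mono_fun fun i _ => Finset.sum_le_sum fun j _ => ?_
    rw [← NNReal.coe_le_coe, coe_nnnorm, coe_nnnorm]
    refine (hpow k i j).trans ?_
    rw [hBk k, Matrix.map_apply, Complex.norm_real]
    exact le_abs_self _
  -- 1 ∈ spectrum of C
  have hspec1 : (1 : ℂ) ∈ spectrum ℂ C := by
    rw [spectrum.mem_iff]
    intro hu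
    apply spectrum.mem_iff.mp hμ
    have hDunit : IsUnit (Matrix.diagonal d) := by
      rw [Matrix.isUnit_iff_isUnit_det, Matrix.det_diagonal]
      exact isUnit_iff_ne_zero.mpr (Finset.prod_ne_zero_iff.mpr fun i _ => hd0 i)
    have key : (algebraMap ℂ (Matrix (Fin n) (Fin n) ℂ) 1 - C) * Matrix.diagonal d =
        algebraMap ℂ (Matrix (Fin n) (Fin n) ℂ) μ - (M - Matrix.diagonal δ).map Complex.ofReal := by
      rw [_root_.map_one, sub_mul, one_mul, hCdef, Matrix.mul_assoc, Matrix.diagonal_mul_diagonal]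
      have : (fun i => (d i)⁻¹ * d i) = fun _ => (1 : ℂ) :=
        funext fun i => inv_mul_cancel₀ (hd0 i)
      rw [this, Matrix.diagonal_one, Matrix.mul_one]
      ext i j
      by_cases h : i = j <;>
        simp [Matrix.sub_apply, Matrix.diagonal_apply, Matrix.map_apply,
          Matrix.algebraMap_matrix_apply, h, hddef]
      ring
    rw [← key]
    exact hu.mul hDunit
  -- spectral radius of B is < 1
  have hρ' : spectralRadius ℂ B < 1 := by
    rcases (spectrum ℂ B).eq_empty_or_nonempty with he | hsne
    · rw [spectralRadius, he]
      simp
    · obtain ⟨m, hm, hmax⟩ :=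
        Set.exists_max_image (spectrum ℂ B) (fun z => ‖z‖₊) (Matrix.finite_spectrum B) hsne
      calc spectralRadius ℂ B ≤ (‖m‖₊ : ENNReal) :=
            iSup₂_le fun z hz => by exact_mod_cast hmax z hz
      _ < 1 := by
            rw [← ENNReal.coe_one, ENNReal.coe_lt_coe, ← NNReal.coe_lt_coe, coe_nnnorm]
            exact hρ m hm
  -- Gelfand: find k with ‖B^k‖₊ < 1
  obtain ⟨k, hk1, hklt⟩ : ∃ k : ℕ, 1 ≤ k ∧ (‖B ^ k‖₊ : ENNReal) ^ (1 / (k:ℝ)) < 1 := by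
    have h1 := spectrum.pow_nnnorm_pow_one_div_tendsto_nhds_spectralRadius B
    have h2 : ∀ᶠ k : ℕ in Filter.atTop,
        (‖B ^ k‖₊ : ENNReal) ^ (1 / (k:ℝ)) < 1 :=
      h1.eventually (Filter.Tendsto.eventually_lt_const hρ' Filter.tendsto_id) |>.mono (fun _ h => h)
    obtain ⟨N, hN⟩ := Filter.eventually_atTop.mp h2
    exact ⟨max N 1, le_max_right _ _, hN _ (le_max_left _ _)⟩
  have hBlt : ‖B ^ k‖₊ < 1 := by
    by_contra hge
    push_neg at hge
    have : (1 : ENNReal) ≤ (‖B ^ k‖₊ : ENNReal) ^ (1 / (k:ℝ)) := by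
      calc (1 : ENNReal) = 1 ^ (1 / (k:ℝ)) := (ENNReal.one_rpow _).symm
      _ ≤ (‖B ^ k‖₊ : ENNReal) ^ (1 / (k:ℝ)) := by
            apply ENNReal.rpow_le_rpow _ (by positivity)
            exact_mod_cast hge
    exact absurd (lt_of_le_of_lt this hklt) (lt_irrefl _)
  -- contradiction
  have h1k : (1 : ℂ) ∈ spectrum ℂ (C ^ k) :=
    spectrum.pow_image_subset C k ⟨1, hspec1, one_pow k⟩
  have := spectrum.norm_le_norm_of_mem h1k
  rw [norm_one] at this
  have h2 : (1 : NNReal) ≤ ‖C ^ k‖₊ := by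
    rw [← NNReal.coe_le_coe, coe_nnnorm]; exact_mod_cast this
  exact absurd (lt_of_le_of_lt (h2.trans (hnorm k)) hBlt) (lt_irrefl _)
end

section
/- Let M be an entrywise non-negative n×n real matrix and V = diag(δ_1,…,δ_n) with δ_i > 0. If every eigenvalue of M − V has strictly negative real part, then the spectral radius of M V^{-1} is strictly less than 1. -/
open Matrix

attribute [local instance]
  Matrix.linftyOpNormedAddCommGroup Matrix.linftyOpNormedRing Matrix.linftyOpNormedAlgebra

section aux

variable {n : ℕ}

private lemma entry_mul_nonneg {A B : Matrix (Fin n) (Fin n) ℝ}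
    (hA : ∀ i j, 0 ≤ A i j) (hB : ∀ i j, 0 ≤ B i j) : ∀ i j, 0 ≤ (A * B) i j := by
  intro i j
  rw [Matrix.mul_apply]
  exact Finset.sum_nonneg fun k _ => mul_nonneg (hA i k) (hB k j)

private lemma entry_pow_nonneg {A : Matrix (Fin n) (Fin n) ℝ}
    (hA : ∀ i j, 0 ≤ A i j) : ∀ m i j, 0 ≤ (A ^ m) i j := by
  intro m
  induction m with
  | zero => intro i j; simp [Matrix.one_apply]; positivity
  | succ m ih => rw [pow_succ]; exact entry_mul_nonneg ih hA

private lemma entry_tsum_pow {A : Matrix (Fin n) (Fin n) ℝ} (h : Summable fun k => A ^ k)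
    (i j : Fin n) : (∑' k, A ^ k) i j = ∑' k, (A ^ k) i j := by
  classical
  let E : Matrix (Fin n) (Fin n) ℝ →ₗ[ℝ] ℝ :=
    (LinearMap.proj (R := ℝ) (φ := fun _ : Fin n => ℝ) j).comp
      (LinearMap.proj (R := ℝ) (φ := fun _ : Fin n => Fin n → ℝ) i)
  have := (LinearMap.toContinuousLinearMap E).map_tsum h
  exact this

private lemma inv_one_sub_nonneg {N : Matrix (Fin n) (Fin n) ℝ}
    (hN : ∀ i j, 0 ≤ N i j) (h : ‖N‖ < 1) : ∀ i j, 0 ≤ (1 - N)⁻¹ i j := by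
  intro i j
  rw [Matrix.nonsing_inv_eq_ringInverse, ← geom_series_eq_inverse N h]
  erw [entry_tsum_pow (summable_geometric_of_norm_lt_one h)]
  exact tsum_nonneg fun k => entry_pow_nonneg hN k i j

end aux

section core

variable {n : ℕ} (M : Matrix (Fin n) (Fin n) ℝ) (δ : Fin n → ℝ)

private def W (s : ℝ) : Matrix (Fin n) (Fin n) ℝ := (Matrix.diagonal δ - M) + s • 1

private lemma isUnit_W
    (hst : ∀ μ ∈ spectrum ℂ ((M - Matrix.diagonal δ).map (Complex.ofReal)), μ.re < 0)
    {s : ℝ} (hs : 0 ≤ s) : IsUnit (W M δ s) := by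
  rw [Matrix.isUnit_iff_isUnit_det, isUnit_iff_ne_zero]
  intro hdet
  have h1 : ((s : ℂ) • (1 : Matrix (Fin n) (Fin n) ℂ)
      - (M - Matrix.diagonal δ).map (Complex.ofReal)).det = 0 := by
    have : (s : ℂ) • (1 : Matrix (Fin n) (Fin n) ℂ)
        - (M - Matrix.diagonal δ).map (Complex.ofReal) = (W M δ s).map (Complex.ofReal) := by
      unfold W
      ext i j
      simp [Matrix.map_apply, Matrix.one_apply, Matrix.sub_apply, Matrix.smul_apply,
        Matrix.add_apply, Matrix.diagonal_apply]
      split <;> push_cast <;> ring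
    rw [this]
    have : (W M δ s).map Complex.ofReal = Complex.ofRealHom.mapMatrix (W M δ s) := rfl
    rw [this, ← RingHom.map_det, hdet, map_zero]
  have h2 : (s : ℂ) ∈ spectrum ℂ ((M - Matrix.diagonal δ).map (Complex.ofReal)) := by
    rw [spectrum.mem_iff]
    intro hu
    rw [Matrix.isUnit_iff_isUnit_det, isUnit_iff_ne_zero] at hu
    apply hu
    rw [← h1]
    congr 1
    rw [Algebra.algebraMap_eq_smul_one]
  have := hst _ h2
  rw [Complex.ofReal_re] at this
  exact absurd this (not_lt.mpr hs)

end core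

section core2

variable {n : ℕ} {M : Matrix (Fin n) (Fin n) ℝ} {δ : Fin n → ℝ}

private lemma W_base_nonneg (hM : ∀ i j, 0 ≤ M i j) (hδ : ∀ i, 0 < δ i) :
    ∀ i j, 0 ≤ (W M δ (‖M‖ + 1))⁻¹ i j := by
  set s₀ : ℝ := ‖M‖ + 1 with hs₀
  have hMnn : (0:ℝ) ≤ ‖M‖ := norm_nonneg _
  have hs₀pos : 0 < s₀ := by positivity
  have hd : ∀ i, 0 < δ i + s₀ := fun i => by have := hδ i; linarith
  set T : Matrix (Fin n) (Fin n) ℝ := Matrix.diagonal (fun i => δ i + s₀) with hT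
  have hTdet : IsUnit T.det := by
    rw [hT, Matrix.det_diagonal, isUnit_iff_ne_zero]
    exact ne_of_gt (Finset.prod_pos fun i _ => hd i)
  have hTinv : T⁻¹ = Matrix.diagonal (fun i => (δ i + s₀)⁻¹) := by
    apply Matrix.inv_eq_right_inv
    rw [hT, Matrix.diagonal_mul_diagonal]
    convert Matrix.diagonal_one with i
    exact mul_inv_cancel₀ (ne_of_gt (hd i))
  set N : Matrix (Fin n) (Fin n) ℝ := T⁻¹ * M with hN
  have hNnn : ∀ i j, 0 ≤ N i j := by
    intro i j
    rw [hN, hTinv, Matrix.diagonal_mul]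
    exact mul_nonneg (inv_nonneg.mpr (hd i).le) (hM i j)
  have hNnorm : ‖N‖ < 1 := by
    have h1 : ‖T⁻¹‖ ≤ s₀⁻¹ := by
      rw [hTinv, Matrix.linfty_opNorm_diagonal, pi_norm_le_iff_of_nonneg (by positivity)]
      intro i
      rw [Real.norm_eq_abs, abs_of_nonneg (inv_nonneg.mpr (hd i).le)]
      exact inv_anti₀ hs₀pos (by have := hδ i; linarith)
    calc ‖N‖ ≤ ‖T⁻¹‖ * ‖M‖ := norm_mul_le _ _
      _ ≤ s₀⁻¹ * ‖M‖ := by apply mul_le_mul_of_nonneg_right h1 hMnn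
      _ < 1 := by rw [inv_mul_lt_iff₀ hs₀pos]; linarith
  have hW : W M δ s₀ = T * (1 - N) := by
    rw [Matrix.mul_sub, mul_one, hN, ← Matrix.mul_assoc, Matrix.mul_nonsing_inv _ hTdet,
      Matrix.one_mul]
    unfold W
    rw [hT, Matrix.smul_one_eq_diagonal, ← Matrix.diagonal_add]
    ext i j
    by_cases h : i = j
    · subst h; simp [Matrix.diagonal_apply_eq]; ring
    · simp [Matrix.diagonal_apply_ne _ h, Matrix.one_apply_ne h]
  have : (W M δ s₀)⁻¹ = (1 - N)⁻¹ * T⁻¹ := by rw [hW, Matrix.mul_inv_rev]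
  rw [this]
  apply entry_mul_nonneg (inv_one_sub_nonneg hNnn hNnorm)
  intro i j
  rw [hTinv]
  by_cases h : i = j
  · subst h; rw [Matrix.diagonal_apply_eq]; exact inv_nonneg.mpr (hd i).le
  · rw [Matrix.diagonal_apply_ne _ h]

end core2

section core3

variable {n : ℕ} {M : Matrix (Fin n) (Fin n) ℝ} {δ : Fin n → ℝ}

private lemma W_nonneg (hM : ∀ i j, 0 ≤ M i j) (hδ : ∀ i, 0 < δ i)
    (hst : ∀ μ ∈ spectrum ℂ ((M - Matrix.diagonal δ).map (Complex.ofReal)), μ.re < 0) :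
    ∀ i j, 0 ≤ (W M δ 0)⁻¹ i j := by
  set s₀ : ℝ := ‖M‖ + 1 with hs₀
  have hs₀pos : (0:ℝ) < s₀ := by positivity
  -- continuity of the resolvent on [0, s₀]
  have hdet : ∀ s : ℝ, 0 ≤ s → IsUnit ((W M δ s).det) := fun s hs =>
    (Matrix.isUnit_iff_isUnit_det _).mp (isUnit_W M δ hst hs)
  have hcont : ContinuousOn (fun s => (W M δ s)⁻¹) (Set.Icc 0 s₀) := by
    have hWc : Continuous (fun s : ℝ => W M δ s) := by
      unfold W
      exact continuous_const.add (continuous_id.smul continuous_const)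
    have hdetc : ContinuousOn (fun s : ℝ => ((W M δ s).det)⁻¹) (Set.Icc 0 s₀) := by
      apply ContinuousOn.inv₀ (hWc.matrix_det.continuousOn)
      intro s hs
      exact isUnit_iff_ne_zero.mp (hdet s hs.1)
    have : ∀ s : ℝ, (W M δ s)⁻¹ = ((W M δ s).det)⁻¹ • (W M δ s).adjugate := by
      intro s
      rw [Matrix.inv_def, Ring.inverse_eq_inv']
    simp_rw [this]
    exact hdetc.smul (hWc.matrix_adjugate.continuousOn)
  obtain ⟨C, hC⟩ := (isCompact_Icc).exists_bound_of_continuousOn hcont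
  have hCpos : (0:ℝ) < C + 1 := by
    have := le_trans (norm_nonneg _) (hC s₀ ⟨hs₀pos.le, le_refl _⟩)
    linarith
  set h : ℝ := (C + 1)⁻¹ / 2 with hh
  have hhpos : 0 < h := by positivity
  -- downward induction
  have key : ∀ k : ℕ, ∀ s : ℝ, 0 ≤ s → s ≤ s₀ → s₀ - s ≤ k * h →
      ∀ i j, 0 ≤ (W M δ s)⁻¹ i j := by
    intro k
    induction k with
    | zero =>
      intro s hs0 hss hk
      have : s = s₀ := by simp at hk; linarith
      subst this
      exact W_base_nonneg hM hδ
    | succ k ih =>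
      intro s hs0 hss hk
      set s' : ℝ := min s₀ (s + h) with hs'
      have hs'0 : 0 ≤ s' := le_min hs₀pos.le (by linarith)
      have hs's₀ : s' ≤ s₀ := min_le_left _ _
      have hss' : s ≤ s' := le_min hss (by linarith)
      have hε : s' - s ≤ h := by
        rcases min_cases s₀ (s + h) with ⟨h1, h2⟩ | ⟨h1, h2⟩ <;> rw [hs', h1] <;> linarith
      have hk' : s₀ - s' ≤ k * h := by
        rcases min_cases s₀ (s + h) with ⟨h1, h2⟩ | ⟨h1, h2⟩ <;> rw [hs', h1]
        · simp; positivity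
        · push_cast at hk ⊢; linarith
      have hR' := ih s' hs'0 hs's₀ hk'
      set ε : ℝ := s' - s with hε'
      have hεnn : 0 ≤ ε := by linarith
      set N : Matrix (Fin n) (Fin n) ℝ := ε • (W M δ s')⁻¹ with hNdef
      have hNnn : ∀ i j, 0 ≤ N i j := fun i j => mul_nonneg hεnn (hR' i j)
      have hNnorm : ‖N‖ < 1 := by
        have h1 : ‖(W M δ s')⁻¹‖ ≤ C := hC s' ⟨hs'0, hs's₀⟩
        have h2 : ‖N‖ = ε * ‖(W M δ s')⁻¹‖ := by
          rw [hNdef, norm_smul, Real.norm_eq_abs, abs_of_nonneg hεnn]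
        rw [h2]
        calc ε * ‖(W M δ s')⁻¹‖ ≤ h * (C + 1) := by
              apply mul_le_mul hε (by linarith) (norm_nonneg _) hhpos.le
          _ = 2⁻¹ := by rw [hh]; field_simp
          _ < 1 := by norm_num
      have hWeq : W M δ s = W M δ s' * (1 - N) := by
        rw [Matrix.mul_sub, mul_one, hNdef, Matrix.mul_smul,
          Matrix.mul_nonsing_inv _ (hdet s' hs'0)]
        unfold W
        rw [hε']
        ext i j
        simp [Matrix.add_apply, Matrix.sub_apply, Matrix.smul_apply, Matrix.one_apply]
        split <;> ring
      rw [hWeq, Matrix.mul_inv_rev]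
      exact entry_mul_nonneg (inv_one_sub_nonneg hNnn hNnorm) hR'
  obtain ⟨k, hk⟩ := exists_nat_ge (s₀ / h)
  apply key k 0 le_rfl hs₀pos.le
  rw [div_le_iff₀ hhpos] at hk
  simpa using hk

end core3

section final

variable {n : ℕ} {M : Matrix (Fin n) (Fin n) ℝ} {δ : Fin n → ℝ}

private lemma summable_pow_entry (hM : ∀ i j, 0 ≤ M i j) (hδ : ∀ i, 0 < δ i)
    (hst : ∀ μ ∈ spectrum ℂ ((M - Matrix.diagonal δ).map (Complex.ofReal)), μ.re < 0)
    (i j : Fin n) :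
    Summable (fun m : ℕ => ((M * (Matrix.diagonal δ)⁻¹) ^ m) i j) := by
  set D : Matrix (Fin n) (Fin n) ℝ := Matrix.diagonal δ with hD
  set A : Matrix (Fin n) (Fin n) ℝ := M * D⁻¹ with hA
  have hDdet : IsUnit D.det := by
    rw [hD, Matrix.det_diagonal, isUnit_iff_ne_zero]
    exact ne_of_gt (Finset.prod_pos fun i _ => hδ i)
  have hDinv : D⁻¹ = Matrix.diagonal (fun i => (δ i)⁻¹) := by
    apply Matrix.inv_eq_right_inv
    rw [hD, Matrix.diagonal_mul_diagonal]
    convert Matrix.diagonal_one with i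
    exact mul_inv_cancel₀ (ne_of_gt (hδ i))
  have hAnn : ∀ i j, 0 ≤ A i j := by
    intro i j
    rw [hA, hDinv, Matrix.mul_diagonal]
    exact mul_nonneg (hM i j) (inv_nonneg.mpr (hδ j).le)
  have hW0 : W M δ 0 = D - M := by unfold W; rw [zero_smul, add_zero, hD]
  have hW0det : IsUnit (W M δ 0).det := (Matrix.isUnit_iff_isUnit_det _).mp
    (isUnit_W M δ hst le_rfl)
  have hone_sub : (1 : Matrix (Fin n) (Fin n) ℝ) - A = W M δ 0 * D⁻¹ := by
    rw [hW0, Matrix.sub_mul, Matrix.mul_nonsing_inv _ hDdet, hA]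
  set C : Matrix (Fin n) (Fin n) ℝ := D * (W M δ 0)⁻¹ with hC
  have hCinv : (1 - A)⁻¹ = C := by
    rw [hone_sub, Matrix.mul_inv_rev, Matrix.nonsing_inv_nonsing_inv _ hDdet, hC]
  have hCnn : ∀ i j, 0 ≤ C i j := by
    intro i j
    rw [hC, hD, Matrix.diagonal_mul]
    exact mul_nonneg (hδ i).le (W_nonneg hM hδ hst i j)
  have honedet : IsUnit ((1 - A) : Matrix (Fin n) (Fin n) ℝ).det := by
    rw [hone_sub, Matrix.det_mul, Matrix.det_nonsing_inv]
    exact hW0det.mul (isUnit_ringInverse.mpr hDdet)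
  have hCmul : C * (1 - A) = 1 := by
    rw [← hCinv]; exact Matrix.nonsing_inv_mul _ honedet
  have hpart : ∀ m : ℕ, C = (∑ k ∈ Finset.range m, A ^ k) + C * A ^ m := by
    intro m
    induction m with
    | zero => simp
    | succ m ih =>
      have : C * A ^ m = A ^ m + C * A ^ (m + 1) := by
        have h1 : C * A = C - 1 := by
          have := hCmul
          rw [Matrix.mul_sub, mul_one] at this
          linear_combination (norm := abel) -this
        have hstep : C * A ^ (m + 1) = C * A ^ m - A ^ m := by
          rw [pow_succ', ← Matrix.mul_assoc, h1, Matrix.sub_mul, Matrix.one_mul]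
        rw [hstep]
        abel
      rw [Finset.sum_range_succ]
      calc C = (∑ k ∈ Finset.range m, A ^ k) + C * A ^ m := ih
        _ = (∑ k ∈ Finset.range m, A ^ k) + (A ^ m + C * A ^ (m + 1)) := by rw [this]
        _ = _ := by abel
  apply summable_of_sum_range_le (c := C i j)
    (fun m => entry_pow_nonneg hAnn m i j)
  intro m
  have h1 : (∑ k ∈ Finset.range m, (A ^ k) i j) = (∑ k ∈ Finset.range m, A ^ k) i j := by
    rw [Matrix.sum_apply]
  rw [h1]
  have h2 := hpart m
  have h3 : (0:ℝ) ≤ (C * A ^ m) i j :=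
    entry_mul_nonneg hCnn (entry_pow_nonneg hAnn m) i j
  have h4 : C i j = (∑ k ∈ Finset.range m, A ^ k) i j + (C * A ^ m) i j := by
    rw [← Matrix.add_apply, ← h2]
  linarith

end final

/-- (van den Driessche–Watmough, converse direction) If `M ≥ 0` entrywise and
`V = diag(δ)` with `δ > 0`, and every eigenvalue of `M - V` has strictly negative
real part, then the spectral radius of `M V⁻¹` is less than `1`. -/
theorem spectralRadius_lt_one_of_eigenvalues_neg
    (n : ℕ) (M : Matrix (Fin n) (Fin n) ℝ) (δ : Fin n → ℝ)
    (hM : ∀ i j, 0 ≤ M i j) (hδ : ∀ i, 0 < δ i)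
    (hst : ∀ μ ∈ spectrum ℂ ((M - Matrix.diagonal δ).map (Complex.ofReal)), μ.re < 0) :
    ∀ μ ∈ spectrum ℂ ((M * (Matrix.diagonal δ)⁻¹).map (Complex.ofReal)),
      ‖μ‖ < 1 := by
  intro μ hμ
  set A : Matrix (Fin n) (Fin n) ℝ := M * (Matrix.diagonal δ)⁻¹ with hA
  set Ac : Matrix (Fin n) (Fin n) ℂ := A.map Complex.ofReal with hAc
  -- eigenvector
  have hdet : (μ • (1 : Matrix (Fin n) (Fin n) ℂ) - Ac).det = 0 := by
    rw [spectrum.mem_iff] at hμ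
    by_contra hne
    exact hμ (by
      rw [Algebra.algebraMap_eq_smul_one]
      exact (Matrix.isUnit_iff_isUnit_det _).mpr (isUnit_iff_ne_zero.mpr hne))
  obtain ⟨v, hv0, hv⟩ := (Matrix.exists_mulVec_eq_zero_iff).mpr hdet
  have heig : Ac.mulVec v = μ • v := by
    have h1 : (μ • (1 : Matrix (Fin n) (Fin n) ℂ) - Ac).mulVec v
        = μ • v - Ac.mulVec v := by
      rw [Matrix.sub_mulVec, Matrix.smul_mulVec, Matrix.one_mulVec]
    rw [h1] at hv
    linear_combination (norm := module) -hv
  -- A is entrywise nonneg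
  have hDinv : (Matrix.diagonal δ)⁻¹ = Matrix.diagonal (fun i => (δ i)⁻¹) := by
    apply Matrix.inv_eq_right_inv
    rw [Matrix.diagonal_mul_diagonal]
    convert Matrix.diagonal_one with i
    exact mul_inv_cancel₀ (ne_of_gt (hδ i))
  have hAnn : ∀ i j, 0 ≤ A i j := by
    intro i j
    rw [hA, hDinv, Matrix.mul_diagonal]
    exact mul_nonneg (hM i j) (inv_nonneg.mpr (hδ j).le)
  -- powers
  have hAcpow : ∀ m : ℕ, Ac ^ m = (A ^ m).map Complex.ofReal := by
    intro m
    induction m with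
    | zero => simp [Matrix.map_one]
    | succ m ih =>
      rw [pow_succ, pow_succ, ih]
      ext i j
      simp [hAc, Matrix.mul_apply, Matrix.map_apply]
  have heigpow : ∀ m : ℕ, (Ac ^ m).mulVec v = μ ^ m • v := by
    intro m
    induction m with
    | zero => simp [Matrix.one_mulVec]
    | succ m ih =>
      rw [pow_succ', ← Matrix.mulVec_mulVec, ih, Matrix.mulVec_smul, heig,
        smul_smul, mul_comm, ← pow_succ']
  obtain ⟨i, hvi⟩ : ∃ i, v i ≠ 0 := Function.ne_iff.mp hv0
  -- entrywise bound
  have hbound : ∀ m : ℕ, ‖μ‖ ^ m * ‖v i‖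
      ≤ ∑ j, (A ^ m) i j * ‖v j‖ := by
    intro m
    have h1 : (μ ^ m • v) i = ((Ac ^ m).mulVec v) i := by rw [heigpow]
    have h2 : ‖(μ ^ m • v) i‖ = ‖μ‖ ^ m * ‖v i‖ := by
      simp [Pi.smul_apply, map_pow]
    rw [← h2, h1, Matrix.mulVec, dotProduct]
    calc ‖∑ j, (Ac ^ m) i j * v j‖
        ≤ ∑ j, ‖(Ac ^ m) i j * v j‖ := norm_sum_le _ _
      _ = ∑ j, (A ^ m) i j * ‖v j‖ := by
          apply Finset.sum_congr rfl
          intro j _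
          rw [norm_mul, hAcpow m, Matrix.map_apply, Complex.norm_real, Real.norm_eq_abs,
            abs_of_nonneg (entry_pow_nonneg hAnn m i j)]
  have hsum : Summable fun m : ℕ => ∑ j, (A ^ m) i j * ‖v j‖ := by
    apply summable_sum
    intro j _
    exact (summable_pow_entry hM hδ hst i j).mul_right _
  have hsum2 : Summable fun m : ℕ => ‖μ‖ ^ m * ‖v i‖ :=
    Summable.of_nonneg_of_le (fun m => by positivity) hbound hsum
  have hvi' : 0 < ‖v i‖ := by
    exact norm_pos_iff.mpr hvi
  have hsum3 : Summable fun m : ℕ => ‖μ‖ ^ m := by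
    have := hsum2.mul_right (‖v i‖)⁻¹
    simpa [mul_assoc, mul_inv_cancel₀ (ne_of_gt hvi')] using this
  have hfin := summable_geometric_iff_norm_lt_one.mp hsum3
  rwa [Real.norm_eq_abs, abs_of_nonneg (norm_nonneg _)] at hfin
end

section
/- (Poincaré–Miranda) Let g = (g_1,…,g_n) : [a_1,b_1]×…×[a_n,b_n] → ℝ^n be continuous, with g_i(x) > 0 whenever x_i = a_i and g_i(x) < 0 whenever x_i = b_i, for each i. Then g has a zero in the open box ∏(a_i,b_i). -/
open Set Finset

namespace PM

/-- A simplex of the Kuhn (Freudenthal) triangulation of the cube `[0,m]^d`: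
a base point with coordinates in `{0,…,m-1}` and an ordering of the coordinate
directions. -/
abbrev KS (d m : ℕ) := (Fin d → Fin m) × Equiv.Perm (Fin d)

/-- The `t`-th vertex of a Kuhn simplex. -/
def vtx {d m : ℕ} (S : KS d m) (t : Fin (d+1)) : Fin d → ℕ :=
  fun j => (S.1 j : ℕ) + if (S.2.symm j : ℕ) < (t : ℕ) then 1 else 0

def lab {d m : ℕ} (ℓ : (Fin d → ℕ) → ℕ) (S : KS d m) (t : Fin (d+1)) : ℕ := ℓ (vtx S t)

def full {d m : ℕ} (ℓ : (Fin d → ℕ) → ℕ) (S : KS d m) : Prop :=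
  Finset.image (lab ℓ S) Finset.univ = Finset.range (d+1)

instance {d m : ℕ} (ℓ : (Fin d → ℕ) → ℕ) (S : KS d m) : Decidable (full ℓ S) :=
  decidable_of_iff (Finset.image (lab ℓ S) Finset.univ = Finset.range (d+1)) Iff.rfl

def door {d m : ℕ} (ℓ : (Fin d → ℕ) → ℕ) (S : KS d m) (t : Fin (d+1)) : Prop :=
  Finset.image (lab ℓ S) (Finset.univ.filter (· ≠ t)) = Finset.range d

instance {d m : ℕ} (ℓ : (Fin d → ℕ) → ℕ) (S : KS d m) (t : Fin (d+1)) :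
    Decidable (door ℓ S t) :=
  decidable_of_iff (Finset.image (lab ℓ S) (Finset.univ.filter (· ≠ t)) = Finset.range d)
    Iff.rfl

lemma vtx_le {d m : ℕ} (S : KS d m) (t : Fin (d+1)) (j : Fin d) : vtx S t j ≤ m := by
  have := (S.1 j).2
  unfold vtx
  split <;> omega

lemma even_card_of_involution {α : Type*} [DecidableEq α] (s : Finset α) (f : α → α)
    (hmem : ∀ a ∈ s, f a ∈ s) (hinv : ∀ a ∈ s, f (f a) = a) (hne : ∀ a ∈ s, f a ≠ a) :
    Even s.card := by
  classical
  generalize hn : s.card = n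
  induction n using Nat.strong_induction_on generalizing s with
  | _ n ih =>
  rcases s.eq_empty_or_nonempty with rfl | ⟨a, ha⟩
  · simp at hn; subst hn; exact Even.zero
  · have hfa : f a ∈ s := hmem a ha
    have hne' : f a ≠ a := hne a ha
    have hfa' : f a ∈ s.erase a := Finset.mem_erase.2 ⟨hne', hfa⟩
    set s' := (s.erase a).erase (f a) with hs'
    have hsub : ∀ x ∈ s', x ∈ s := fun x hx =>
      Finset.mem_of_mem_erase (Finset.mem_of_mem_erase hx)
    have hcard : s'.card = n - 2 := by
      rw [hs', Finset.card_erase_of_mem hfa', Finset.card_erase_of_mem ha, hn]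
      omega
    have h2 : 2 ≤ n := by
      rw [← hn]
      exact Finset.one_lt_card.2 ⟨a, ha, f a, hfa, hne'.symm⟩
    have hmaps : ∀ x ∈ s', f x ∈ s' := by
      intro x hx
      have hxs := hsub x hx
      have hxa : x ≠ a := (Finset.mem_erase.1 (Finset.mem_of_mem_erase hx)).1
      have hxfa : x ≠ f a := (Finset.mem_erase.1 hx).1
      refine Finset.mem_erase.2 ⟨?_, Finset.mem_erase.2 ⟨?_, hmem x hxs⟩⟩
      · intro h; apply hxa; rw [← hinv x hxs, h, hinv a ha]
      · intro h; apply hxfa; rw [← hinv x hxs, h]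
    have hev : Even (n - 2) := by
      refine ih (n-2) (by omega) s' hmaps ?_ ?_ hcard
      · exact fun x hx => hinv x (hsub x hx)
      · exact fun x hx => hne x (hsub x hx)
    obtain ⟨k, hk⟩ := hev
    exact ⟨k+1, by omega⟩

lemma odd_iff_zmod {n : ℕ} : Odd n ↔ (n : ZMod 2) = 1 := by
  have h : ((n % 2 : ℕ) : ZMod 2) = (n : ZMod 2) := ZMod.natCast_mod n 2
  rw [Nat.odd_iff]
  constructor
  · intro h1; rw [← h, h1]; rfl
  · intro h1
    by_contra h2
    have : n % 2 = 0 := by omega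
    rw [← h, this] at h1
    simp at h1

lemma even_zmod {n : ℕ} (h : Even n) : (n : ZMod 2) = 0 := by
  obtain ⟨k, rfl⟩ := h
  push_cast
  ring_nf
  rw [show ((2 : ZMod 2)) = 0 from rfl]
  ring

lemma card_le_fiber_sum {β : Type*} [DecidableEq β] (s : Finset β) (c : β → ℕ)
    (h : ∀ v ∈ s, 1 ≤ c v) : s.card ≤ ∑ v ∈ s, c v := by
  have := Finset.card_nsmul_le_sum s c 1 h
  simpa using this

lemma count_doors (d : ℕ) (L : Fin (d+2) → ℕ) (hL : ∀ t, L t ≤ d+1) :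
    ((Finset.univ.filter
        (fun t => (Finset.univ.filter (· ≠ t)).image L = Finset.range (d+1))).card : ZMod 2)
      = if Finset.univ.image L = Finset.range (d+2) then 1 else 0 := by
  classical
  set I : Finset ℕ := Finset.univ.image L with hI
  have hIins : ∀ t, I = insert (L t) ((Finset.univ.filter (· ≠ t)).image L) := by
    intro t
    ext v
    simp only [hI, Finset.mem_insert, Finset.mem_image, Finset.mem_filter, Finset.mem_univ,
      true_and]
    constructor
    · rintro ⟨s, rfl⟩
      by_cases hs : s = t
      · subst hs; left; rfl
      · right; exact ⟨s, hs, rfl⟩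
    · rintro (rfl | ⟨s, hs, rfl⟩)
      · exact ⟨t, rfl⟩
      · exact ⟨s, rfl⟩
  by_cases hfull : Finset.univ.image L = Finset.range (d+2)
  · -- full case : exactly one door
    rw [if_pos hfull]
    have hinj : Set.InjOn L (Finset.univ : Finset (Fin (d+2))) := by
      rw [← Finset.card_image_iff]
      rw [hfull, Finset.card_range, Finset.card_univ, Fintype.card_fin]
    obtain ⟨t0, -, ht0⟩ : ∃ t0 ∈ Finset.univ, L t0 = d + 1 := by
      have : d + 1 ∈ Finset.univ.image L := by rw [hfull]; simp
      simpa using Finset.mem_image.1 this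
    have : Finset.univ.filter
        (fun t => (Finset.univ.filter (· ≠ t)).image L = Finset.range (d+1)) = {t0} := by
      ext t
      simp only [Finset.mem_filter, Finset.mem_univ, true_and, Finset.mem_singleton]
      constructor
      · intro hdoor
        by_contra hne
        have ht0mem : L t0 ∈ (Finset.univ.filter (· ≠ t)).image L := by
          apply Finset.mem_image_of_mem
          simp only [Finset.mem_filter, Finset.mem_univ, true_and]
          exact fun h => hne h.symm
        rw [hdoor, ht0, Finset.mem_range] at ht0mem
        omega
      · rintro rfl
        ext x
        simp only [Finset.mem_image, Finset.mem_filter, Finset.mem_univ, true_and,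
          Finset.mem_range]
        constructor
        · rintro ⟨s, hs, rfl⟩
          have h1 : L s ≤ d + 1 := hL s
          have h2 : L s ≠ d + 1 := by
            intro h
            exact hs (hinj (by simp) (by simp) (h.trans ht0.symm))
          omega
        · intro hx
          have : x ∈ Finset.univ.image L := by rw [hfull]; simp; omega
          obtain ⟨s, -, rfl⟩ := Finset.mem_image.1 this
          refine ⟨s, fun h => ?_, rfl⟩
          rw [h, ht0] at hx
          omega
    rw [this, Finset.card_singleton, Nat.cast_one]
  · rw [if_neg hfull]
    by_cases hI1 : I = Finset.range (d+1)
    · -- the interesting case: doors come in pairs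
      set c : ℕ → ℕ := fun v => (Finset.univ.filter (fun t => L t = v)).card with hc
      have hsum : ∑ v ∈ I, c v = d + 2 := by
        rw [hc, ← Finset.card_eq_sum_card_fiberwise (fun t _ => Finset.mem_image_of_mem L
          (Finset.mem_univ t)), Finset.card_univ, Fintype.card_fin]
      have hcardI : I.card = d + 1 := by rw [hI1, Finset.card_range]
      have hone : ∀ v ∈ I, 1 ≤ c v := by
        intro v hv
        obtain ⟨t, -, rfl⟩ := Finset.mem_image.1 hv
        have : t ∈ Finset.univ.filter (fun s => L s = L t) := by simp
        exact Finset.card_pos.2 ⟨t, this⟩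
      have hbound1 : ∀ v0 ∈ I, c v0 + d ≤ d + 2 := by
        intro v0 hv0
        have h1 : c v0 + ∑ v ∈ I.erase v0, c v = d + 2 := by
          rw [Finset.add_sum_erase I c hv0, hsum]
        have h2 : (I.erase v0).card ≤ ∑ v ∈ I.erase v0, c v :=
          card_le_fiber_sum _ _ (fun v hv => hone v (Finset.mem_of_mem_erase hv))
        have h3 : (I.erase v0).card = d := by
          rw [Finset.card_erase_of_mem hv0, hcardI]
          omega
        omega
      have hbound2 : ∀ v0 ∈ I, ∀ w ∈ I, v0 ≠ w → c v0 + c w + (d-1) ≤ d + 2 := by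
        intro v0 hv0 w hw hne
        have hw' : w ∈ I.erase v0 := Finset.mem_erase.2 ⟨hne.symm, hw⟩
        have h1 : c v0 + ∑ v ∈ I.erase v0, c v = d + 2 := by
          rw [Finset.add_sum_erase I c hv0, hsum]
        have h2 : c w + ∑ v ∈ (I.erase v0).erase w, c v = ∑ v ∈ I.erase v0, c v := by
          rw [Finset.add_sum_erase _ c hw']
        have h3 : ((I.erase v0).erase w).card ≤ ∑ v ∈ (I.erase v0).erase w, c v :=
          card_le_fiber_sum _ _ (fun v hv => hone v
            (Finset.mem_of_mem_erase (Finset.mem_of_mem_erase hv)))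
        have h4 : ((I.erase v0).erase w).card = d - 1 := by
          rw [Finset.card_erase_of_mem hw', Finset.card_erase_of_mem hv0, hcardI]
          omega
        omega
      -- duplicate pair
      obtain ⟨t1, -, t2, -, hne12, heq12⟩ :=
        Finset.exists_ne_map_eq_of_card_lt_of_maps_to
          (s := (Finset.univ : Finset (Fin (d+2)))) (t := I)
          (by rw [Finset.card_univ, Fintype.card_fin, hcardI]; omega)
          (fun t _ => Finset.mem_image_of_mem L (Finset.mem_univ t))
      set v0 := L t1 with hv0def
      have hv0I : v0 ∈ I := Finset.mem_image_of_mem L (Finset.mem_univ t1)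
      have hpairsub : ∀ t, L t = v0 → ({t1, t2} : Finset (Fin (d+2))) ⊆
          Finset.univ.filter (fun u => L u = v0) := by
        intro t ht u hu
        simp only [Finset.mem_insert, Finset.mem_singleton] at hu
        rcases hu with rfl | rfl <;> simp [hv0def, ← heq12]
      have hcv0 : 2 ≤ c v0 := by
        calc 2 = ({t1, t2} : Finset (Fin (d+2))).card := (Finset.card_pair hne12).symm
        _ ≤ _ := Finset.card_le_card (hpairsub t1 rfl)
      have hdup : ∀ t, (∃ s, s ≠ t ∧ L s = L t) → L t = v0 := by
        rintro t ⟨s, hst, hLs⟩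
        by_contra hne
        have hLtI : L t ∈ I := Finset.mem_image_of_mem L (Finset.mem_univ t)
        have hct : 2 ≤ c (L t) := by
          have hsub : ({s, t} : Finset (Fin (d+2))) ⊆
              Finset.univ.filter (fun u => L u = L t) := by
            intro u hu
            simp only [Finset.mem_insert, Finset.mem_singleton] at hu
            rcases hu with rfl | rfl <;> simp [hLs]
          calc 2 = ({s, t} : Finset (Fin (d+2))).card := (Finset.card_pair hst).symm
          _ ≤ _ := Finset.card_le_card hsub
        have := hbound2 v0 hv0I (L t) hLtI (fun h => hne h.symm)
        omega
      have hdoor_iff : ∀ t, ((Finset.univ.filter (· ≠ t)).image L = Finset.range (d+1))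
          ↔ L t = v0 := by
        intro t
        constructor
        · intro hdoor
          apply hdup
          have : L t ∈ (Finset.univ.filter (· ≠ t)).image L := by
            rw [hdoor, ← hI1]
            exact Finset.mem_image_of_mem L (Finset.mem_univ t)
          obtain ⟨s, hs, hLs⟩ := Finset.mem_image.1 this
          simp only [Finset.mem_filter, Finset.mem_univ, true_and] at hs
          exact ⟨s, hs, hLs⟩
        · intro ht
          rw [← hI1]
          apply Finset.Subset.antisymm
          · exact Finset.image_subset_image (Finset.filter_subset _ _)
          · intro x hx
            obtain ⟨u, -, rfl⟩ := Finset.mem_image.1 hx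
            by_cases hu : u = t
            · subst hu
              -- L u = v0 = L t1 = L t2 ; one of t1 t2 differs from u
              rcases eq_or_ne t1 u with rfl | h1
              · exact Finset.mem_image.2 ⟨t2, by simp [Ne.symm hne12],
                  by rw [← heq12, ← ht]⟩
              · exact Finset.mem_image.2 ⟨t1, by simp [h1], by rw [hv0def] at ht; rw [ht]⟩
            · exact Finset.mem_image.2 ⟨u, by simp [hu], rfl⟩
      have hfilter : Finset.univ.filter
          (fun t => (Finset.univ.filter (· ≠ t)).image L = Finset.range (d+1))
          = Finset.univ.filter (fun t => L t = v0) := by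
        ext t
        simp only [Finset.mem_filter, Finset.mem_univ, true_and]
        exact hdoor_iff t
      have hfib2 : Finset.univ.filter (fun t => L t = v0) = {t1, t2} := by
        apply Finset.Subset.antisymm
        · intro u hu
          simp only [Finset.mem_filter, Finset.mem_univ, true_and] at hu
          by_contra hnotin
          simp only [Finset.mem_insert, Finset.mem_singleton, not_or] at hnotin
          have hsub3 : ({u, t1, t2} : Finset (Fin (d+2))) ⊆
              Finset.univ.filter (fun t => L t = v0) := by
            intro w hw
            simp only [Finset.mem_insert, Finset.mem_singleton] at hw
            rcases hw with rfl | rfl | rfl <;> simp [hu, hv0def, ← heq12]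
          have h3 : ({u, t1, t2} : Finset (Fin (d+2))).card = 3 := by
            rw [Finset.card_insert_of_notMem (by simp [hnotin.1, hnotin.2]),
              Finset.card_pair hne12]
          have h5 := Finset.card_le_card hsub3
          rw [h3] at h5
          have h6 : (Finset.univ.filter (fun t => L t = v0)).card + d ≤ d + 2 :=
            hbound1 v0 hv0I
          omega
        · exact hpairsub t1 rfl
      rw [hfilter, hfib2, Finset.card_pair hne12]
      decide
    · -- no doors at all
      have hempty : Finset.univ.filter
          (fun t => (Finset.univ.filter (· ≠ t)).image L = Finset.range (d+1)) = ∅ := by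
        rw [Finset.filter_eq_empty_iff]
        intro t _ht hdoor
        have hins := hIins t
        rw [hdoor] at hins
        rcases Nat.lt_or_ge (L t) (d+1) with h | h
        · apply hI1
          rw [hins, Finset.insert_eq_self.2 (Finset.mem_range.2 h)]
        · have hLt : L t = d + 1 := le_antisymm (hL t) h
          apply hfull
          rw [← hI, hins, hLt]
          exact (Finset.range_add_one).symm
      rw [hempty]
      simp

section Helpers

variable {d m : ℕ}

/-- Extend a permutation of `Fin d` to `Fin (d+1)` fixing the last element. -/
def extPerm (σ : Equiv.Perm (Fin d)) : Equiv.Perm (Fin (d+1)) where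
  toFun := Fin.snoc (fun t => (σ t).castSucc) (Fin.last d)
  invFun := Fin.snoc (fun t => (σ.symm t).castSucc) (Fin.last d)
  left_inv t := by
    induction t using Fin.lastCases with
    | last => simp
    | cast t => simp
  right_inv t := by
    induction t using Fin.lastCases with
    | last => simp
    | cast t => simp

@[simp] lemma extPerm_castSucc (σ : Equiv.Perm (Fin d)) (t : Fin d) :
    extPerm σ t.castSucc = (σ t).castSucc := by simp [extPerm]

@[simp] lemma extPerm_last (σ : Equiv.Perm (Fin d)) :
    extPerm σ (Fin.last d) = Fin.last d := by simp [extPerm]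

@[simp] lemma extPerm_symm_castSucc (σ : Equiv.Perm (Fin d)) (t : Fin d) :
    (extPerm σ).symm t.castSucc = (σ.symm t).castSucc := by simp [extPerm]

@[simp] lemma extPerm_symm_last (σ : Equiv.Perm (Fin d)) :
    (extPerm σ).symm (Fin.last d) = Fin.last d := by simp [extPerm]

lemma extPerm_injective : Function.Injective (extPerm (d := d)) := by
  intro σ1 σ2 h
  ext t
  have := congrArg (fun τ : Equiv.Perm (Fin (d+1)) => τ t.castSucc) h
  simp only [extPerm_castSucc] at this
  exact congrArg Fin.val (Fin.castSucc_injective _ this)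

lemma exists_extPerm (τ : Equiv.Perm (Fin (d+1))) (hτ : τ (Fin.last d) = Fin.last d) :
    ∃ σ : Equiv.Perm (Fin d), extPerm σ = τ := by
  have hτs : τ.symm (Fin.last d) = Fin.last d := by
    rw [Equiv.symm_apply_eq]
    exact hτ.symm
  have h1 : ∀ t : Fin d, τ t.castSucc ≠ Fin.last d := by
    intro t h
    have := τ.injective (h.trans hτ.symm)
    exact (Fin.castSucc_lt_last t).ne this
  have h2 : ∀ t : Fin d, τ.symm t.castSucc ≠ Fin.last d := by
    intro t h
    have := τ.symm.injective (h.trans hτs.symm)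
    exact (Fin.castSucc_lt_last t).ne this
  refine ⟨⟨fun t => (τ t.castSucc).castPred (h1 t),
          fun t => (τ.symm t.castSucc).castPred (h2 t), ?_, ?_⟩, ?_⟩
  · intro t
    apply Fin.castSucc_injective
    rw [Fin.castSucc_castPred, Fin.castSucc_castPred, Equiv.symm_apply_apply]
  · intro t
    apply Fin.castSucc_injective
    rw [Fin.castSucc_castPred, Fin.castSucc_castPred, Equiv.apply_symm_apply]
  · apply Equiv.ext
    intro t
    induction t using Fin.lastCases with
    | last => rw [extPerm_last, hτ]
    | cast t =>
      rw [extPerm_castSucc]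
      simp only [Equiv.coe_fn_mk]
      exact Fin.castSucc_castPred _ _

/-- Vertices of the extended simplex. -/
lemma vtx_snoc (y : Fin d → Fin m) (σ : Equiv.Perm (Fin d)) (z : Fin m) (u : Fin (d+1)) :
    vtx ((Fin.snoc y z, extPerm σ) : KS (d+1) m) u.castSucc
      = Fin.snoc (vtx ((y, σ) : KS d m) u) (z : ℕ) := by
  funext j
  induction j using Fin.lastCases with
  | last =>
    simp only [vtx, Fin.snoc_last, extPerm_symm_last]
    rw [if_neg]
    · simp
    · have hu : (u : ℕ) < d + 1 := u.isLt
      simp only [Fin.val_last, Fin.coe_castSucc]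
      omega
  | cast i =>
    simp only [vtx, Fin.snoc_castSucc, extPerm_symm_castSucc]
    congr 1

end Helpers
section Helpers2
variable {d m : ℕ}

lemma symm_mul_apply (σ τ : Equiv.Perm (Fin (d+1))) (j : Fin (d+1)) :
    (σ * τ).symm j = τ.symm (σ.symm j) := by
  rw [← Equiv.Perm.inv_def, mul_inv_rev, Equiv.Perm.mul_apply, Equiv.Perm.inv_def,
    Equiv.Perm.inv_def]

lemma vtx_mul_swap (y : Fin (d+1) → Fin m) (σ : Equiv.Perm (Fin (d+1)))
    (s1 s2 : Fin (d+1)) (h12 : (s1 : ℕ) + 1 = s2) (s : Fin (d+2)) (hs : (s : ℕ) ≠ (s2 : ℕ)) :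
    vtx ((y, σ * Equiv.swap s1 s2) : KS (d+1) m) s = vtx ((y, σ) : KS (d+1) m) s := by
  funext j
  show (y j : ℕ) + _ = (y j : ℕ) + _
  have key : (σ * Equiv.swap s1 s2).symm j = Equiv.swap s1 s2 (σ.symm j) := by
    rw [symm_mul_apply, Equiv.symm_swap]
  rw [key]
  rcases eq_or_ne (σ.symm j) s1 with h | h1
  · rw [h, Equiv.swap_apply_left]
    split_ifs with hc1 hc2 <;> rw [h] at * <;> omega
  · rcases eq_or_ne (σ.symm j) s2 with h | h2
    · rw [h, Equiv.swap_apply_right]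
      split_ifs with hc1 hc2 <;> rw [h] at * <;> omega
    · rw [Equiv.swap_apply_of_ne_of_ne h1 h2]

lemma vtx_rotate (y : Fin (d+1) → Fin m) (σ : Equiv.Perm (Fin (d+1)))
    (h : (y (σ 0) : ℕ) + 1 < m) (u : Fin (d+1)) :
    vtx ((Function.update y (σ 0) ⟨(y (σ 0) : ℕ) + 1, h⟩,
          σ * finRotate (d+1)) : KS (d+1) m) u.castSucc
      = vtx ((y, σ) : KS (d+1) m) u.succ := by
  funext j
  have key : finRotate (d+1) ((σ * finRotate (d+1)).symm j) = σ.symm j := by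
    rw [symm_mul_apply, Equiv.apply_symm_apply]
  set w : Fin (d+1) := (σ * finRotate (d+1)).symm j with hw
  show (Function.update y (σ 0) ⟨(y (σ 0) : ℕ) + 1, h⟩ j : ℕ)
      + (if (w : ℕ) < (u.castSucc : ℕ) then 1 else 0)
    = (y j : ℕ) + (if ((σ.symm j : Fin (d+1)) : ℕ) < (u.succ : ℕ) then 1 else 0)
  rcases eq_or_ne w (Fin.last d) with hlast | hne
  · have hj : j = σ 0 := by
      rw [← Equiv.apply_symm_apply σ j]
      congr 1
      rw [← key, hlast, finRotate_last]
    have e1 : (Function.update y (σ 0) ⟨(y (σ 0) : ℕ) + 1, h⟩ j : ℕ) = (y j : ℕ) + 1 := by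
      rw [hj, Function.update_self]
    have e2 : ((σ.symm j : Fin (d+1)) : ℕ) = 0 := by
      rw [hj, Equiv.symm_apply_apply]
      rfl
    have e3 : ((w : ℕ)) = d := by rw [hlast]; rfl
    have e4 : (u.castSucc : ℕ) = (u : ℕ) := rfl
    have e5 : (u.succ : ℕ) = (u : ℕ) + 1 := rfl
    have e6 : (u : ℕ) < d + 1 := u.isLt
    rw [e1]
    split_ifs <;> omega
  · have hval : ((σ.symm j : Fin (d+1)) : ℕ) = (w : ℕ) + 1 := by
      rw [← key, finRotate_succ_apply, Fin.val_add_one, if_neg hne]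
    have hjne : j ≠ σ 0 := by
      intro hj
      rw [hj, Equiv.symm_apply_apply] at hval
      simp at hval
    rw [Function.update_of_ne hjne]
    have h2 : (u.castSucc : ℕ) = (u : ℕ) := rfl
    have h3 : (u.succ : ℕ) = (u : ℕ) + 1 := rfl
    split_ifs <;> omega

lemma filter_ne_last (n : ℕ) :
    (Finset.univ.filter (· ≠ Fin.last n) : Finset (Fin (n+1)))
      = Finset.univ.image Fin.castSucc := by
  ext s
  simp only [Finset.mem_filter, Finset.mem_univ, true_and, Finset.mem_image]
  rw [← Fin.exists_castSucc_eq]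

lemma filter_ne_zero (n : ℕ) :
    (Finset.univ.filter (· ≠ (0 : Fin (n+1))))
      = Finset.univ.image Fin.succ := by
  ext s
  simp only [Finset.mem_filter, Finset.mem_univ, true_and, Finset.mem_image]
  rw [← Fin.exists_succ_eq]

end Helpers2

variable {d m : ℕ}

lemma door_zero_lt (ℓ : (Fin (d+1) → ℕ) → ℕ)
    (H2 : ∀ x : Fin (d+1) → ℕ, (∀ j, x j ≤ m) → ∀ i : Fin (d+1), ℓ x = i → x i < m)
    (S : KS (d+1) m) (hdoor : door ℓ S (0 : Fin (d+2))) :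
    (S.1 (S.2 0) : ℕ) + 1 < m := by
  by_contra hge
  have hylt : (S.1 (S.2 0) : ℕ) < m := (S.1 (S.2 0)).isLt
  have hcoord : ∀ s : Fin (d+2), s ≠ 0 → vtx S s (S.2 0) = m := by
    intro s hs
    have hsv : (s : ℕ) ≠ 0 := fun h => hs (Fin.ext h)
    unfold vtx
    rw [Equiv.symm_apply_apply]
    rw [if_pos (by simp only [Fin.val_zero]; omega : ((0 : Fin (d+1)) : ℕ) < (s : ℕ))]
    omega
  have hmem : ((S.2 0 : Fin (d+1)) : ℕ) ∈ Finset.image (lab ℓ S)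
      (Finset.univ.filter (· ≠ (0 : Fin (d+2)))) := by
    rw [hdoor, Finset.mem_range]
    exact (S.2 0).isLt
  obtain ⟨s, hs, hlab⟩ := Finset.mem_image.1 hmem
  simp only [Finset.mem_filter, Finset.mem_univ, true_and] at hs
  have := H2 (vtx S s) (vtx_le S s) (S.2 0) hlab
  rw [hcoord s hs] at this
  omega

lemma door_last_fix (ℓ : (Fin (d+1) → ℕ) → ℕ)
    (H1 : ∀ x : Fin (d+1) → ℕ, (∀ j, x j ≤ m) → ∀ i : Fin (d+1), x i = 0 → ℓ x ≤ i)
    (S : KS (d+1) m) (hdoor : door ℓ S (Fin.last (d+1)))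
    (h0 : (S.1 (S.2 (Fin.last d)) : ℕ) = 0) :
    S.2 (Fin.last d) = Fin.last d := by
  have hcoord : ∀ s : Fin (d+2), s ≠ Fin.last (d+1) → vtx S s (S.2 (Fin.last d)) = 0 := by
    intro s hs
    have hsv : (s : ℕ) < d + 1 := by
      have h1 : (s : ℕ) < d + 2 := s.isLt
      have h2 : (s : ℕ) ≠ d + 1 := fun h => hs (Fin.ext (by rw [h]; rfl))
      omega
    unfold vtx
    rw [Equiv.symm_apply_apply]
    rw [if_neg (by simp only [Fin.val_last]; omega)]
    omega
  have hmem : d ∈ Finset.image (lab ℓ S)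
      (Finset.univ.filter (· ≠ Fin.last (d+1))) := by
    rw [hdoor, Finset.mem_range]
    omega
  obtain ⟨s, hs, hlab⟩ := Finset.mem_image.1 hmem
  simp only [Finset.mem_filter, Finset.mem_univ, true_and] at hs
  have hle := H1 (vtx S s) (vtx_le S s) (S.2 (Fin.last d)) (hcoord s hs)
  have hlab' : ℓ (vtx S s) = d := hlab
  rw [hlab'] at hle
  have hub : ((S.2 (Fin.last d) : Fin (d+1)) : ℕ) < d + 1 := (S.2 (Fin.last d)).isLt
  exact Fin.ext (by simp only [Fin.val_last]; omega)


end PM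

namespace PM
variable {d m : ℕ}

lemma finRotate_symm_zero : (finRotate (d+1))⁻¹ (0 : Fin (d+1)) = Fin.last d := by
  rw [Equiv.Perm.inv_eq_iff_eq]
  exact finRotate_last.symm

lemma rotimg (ℓ : (Fin (d+1) → ℕ) → ℕ) (y : Fin (d+1) → Fin m) (σ : Equiv.Perm (Fin (d+1)))
    (h : (y (σ 0) : ℕ) + 1 < m) :
    Finset.image (lab ℓ ((Function.update y (σ 0) ⟨(y (σ 0) : ℕ) + 1, h⟩,
        σ * finRotate (d+1)) : KS (d+1) m)) (Finset.univ.filter (· ≠ Fin.last (d+1)))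
      = Finset.image (lab ℓ ((y, σ) : KS (d+1) m))
          (Finset.univ.filter (· ≠ (0 : Fin (d+2)))) := by
  rw [filter_ne_last, filter_ne_zero, Finset.image_image, Finset.image_image]
  apply Finset.image_congr
  intro u _
  show lab ℓ _ u.castSucc = lab ℓ _ u.succ
  unfold lab
  rw [vtx_rotate]

lemma swapimg (ℓ : (Fin (d+1) → ℕ) → ℕ) (y : Fin (d+1) → Fin m) (σ : Equiv.Perm (Fin (d+1)))
    (s1 s2 : Fin (d+1)) (h12 : (s1 : ℕ) + 1 = s2) (t : Fin (d+2)) (ht : (t : ℕ) = (s2 : ℕ)) :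
    Finset.image (lab ℓ ((y, σ * Equiv.swap s1 s2) : KS (d+1) m))
        (Finset.univ.filter (· ≠ t))
      = Finset.image (lab ℓ ((y, σ) : KS (d+1) m)) (Finset.univ.filter (· ≠ t)) := by
  apply Finset.image_congr
  intro s hs
  simp only [Finset.coe_filter, Set.mem_setOf_eq] at hs
  unfold lab
  rw [vtx_mul_swap y σ s1 s2 h12 s (by
    intro h
    exact hs.2 (Fin.ext (by omega)))]

lemma snocimg (ℓ : (Fin (d+1) → ℕ) → ℕ) (hm : 0 < m) (y : Fin d → Fin m)
    (σ : Equiv.Perm (Fin d)) :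
    Finset.image (lab ℓ ((Fin.snoc y ⟨0, hm⟩, extPerm σ) : KS (d+1) m))
        (Finset.univ.filter (· ≠ Fin.last (d+1)))
      = Finset.image (lab (fun x : Fin d → ℕ => ℓ (Fin.snoc x 0)) ((y, σ) : KS d m))
          Finset.univ := by
  rw [filter_ne_last, Finset.image_image]
  apply Finset.image_congr
  intro u _
  show lab ℓ _ u.castSucc = _
  unfold lab
  rw [vtx_snoc]

lemma doorcount (ℓ : (Fin (d+1) → ℕ) → ℕ)
    (H0 : ∀ x : Fin (d+1) → ℕ, (∀ j, x j ≤ m) → ℓ x ≤ d+1) (S : KS (d+1) m) :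
    ((Finset.univ.filter (fun t => door ℓ S t)).card : ZMod 2)
      = if full ℓ S then 1 else 0 := by
  have h := count_doors d (lab ℓ S) (fun t => H0 _ (vtx_le S t))
  have e1 : (Finset.univ.filter (fun t => door ℓ S t))
      = (Finset.univ.filter (fun t => (Finset.univ.filter (· ≠ t)).image (lab ℓ S)
          = Finset.range (d+1))) := by
    ext t
    simp only [Finset.mem_filter]
    exact and_congr_right fun _ => Iff.rfl
  rw [e1, h]
  by_cases hf : Finset.image (lab ℓ S) Finset.univ = Finset.range (d+2)
  · rw [if_pos hf, if_pos (show full ℓ S from hf)]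
  · rw [if_neg hf, if_neg (show ¬ full ℓ S from hf)]

end PM
namespace PM
variable {d m : ℕ}

/-- The pivot ("reflection") map pairing up doors of the Kuhn triangulation. -/
def flip (p : KS (d+1) m × Fin (d+2)) : KS (d+1) m × Fin (d+2) :=
  if h0 : (p.2 : ℕ) = 0 then
    if h : (p.1.1 (p.1.2 0) : ℕ) + 1 < m then
      ((Function.update p.1.1 (p.1.2 0) ⟨(p.1.1 (p.1.2 0) : ℕ) + 1, h⟩,
        p.1.2 * finRotate (d+1)), Fin.last (d+1))
    else p
  else if hl : (p.2 : ℕ) = d + 1 then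
    ((Function.update p.1.1 (p.1.2 (Fin.last d))
        ⟨(p.1.1 (p.1.2 (Fin.last d)) : ℕ) - 1,
          Nat.lt_of_le_of_lt (Nat.sub_le _ _) (p.1.1 (p.1.2 (Fin.last d))).isLt⟩,
      p.1.2 * (finRotate (d+1))⁻¹), 0)
  else
    ((p.1.1, p.1.2 * Equiv.swap ⟨(p.2 : ℕ) - 1, by have := p.2.isLt; omega⟩
        ⟨(p.2 : ℕ), by have := p.2.isLt; omega⟩), p.2)

lemma flip_spec (ℓ : (Fin (d+1) → ℕ) → ℕ)
    (H1 : ∀ x : Fin (d+1) → ℕ, (∀ j, x j ≤ m) → ∀ i : Fin (d+1), x i = 0 → ℓ x ≤ i)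
    (H2 : ∀ x : Fin (d+1) → ℕ, (∀ j, x j ≤ m) → ∀ i : Fin (d+1), ℓ x = i → x i < m)
    (p : KS (d+1) m × Fin (d+2))
    (hdoor : door ℓ p.1 p.2)
    (hnB : ¬(p.2 = Fin.last (d+1) ∧ (p.1.1 (p.1.2 (Fin.last d)) : ℕ) = 0)) :
    (door ℓ (flip p).1 (flip p).2
      ∧ ¬((flip p).2 = Fin.last (d+1)
          ∧ ((flip p).1.1 ((flip p).1.2 (Fin.last d)) : ℕ) = 0))
    ∧ flip (flip p) = p ∧ flip p ≠ p := by
  obtain ⟨⟨y, σ⟩, t⟩ := p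
  simp only at hdoor hnB ⊢
  by_cases h0 : (t : ℕ) = 0
  · -- dropped vertex is the bottom one
    have ht : t = 0 := Fin.ext h0
    subst ht
    have hb : (y (σ 0) : ℕ) + 1 < m := door_zero_lt ℓ H2 (y, σ) hdoor
    have hflip1 : flip ((y, σ), (0 : Fin (d+2)))
        = ((Function.update y (σ 0) ⟨(y (σ 0) : ℕ) + 1, hb⟩, σ * finRotate (d+1)),
            Fin.last (d+1)) := by
      simp only [flip]
      rw [dif_pos h0, dif_pos hb]
    have harg : (σ * finRotate (d+1)) (Fin.last d) = σ 0 := by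
      rw [Equiv.Perm.mul_apply, finRotate_last]
    rw [hflip1]
    refine ⟨⟨?_, ?_⟩, ?_, ?_⟩
    · -- door
      show Finset.image _ _ = Finset.range (d+1)
      rw [rotimg ℓ y σ hb]
      exact hdoor
    · -- not in B
      rintro ⟨-, hz⟩
      rw [harg] at hz
      simp at hz
    · -- involution
      have hfl2 : flip ((Function.update y (σ 0) ⟨(y (σ 0) : ℕ) + 1, hb⟩,
          σ * finRotate (d+1)), Fin.last (d+1))
          = ((Function.update (Function.update y (σ 0) ⟨(y (σ 0) : ℕ) + 1, hb⟩)
                ((σ * finRotate (d+1)) (Fin.last d))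
                ⟨((Function.update y (σ 0) ⟨(y (σ 0) : ℕ) + 1, hb⟩
                    ((σ * finRotate (d+1)) (Fin.last d)) : ℕ)) - 1,
                  Nat.lt_of_le_of_lt (Nat.sub_le _ _) (Fin.isLt _)⟩,
              σ * finRotate (d+1) * (finRotate (d+1))⁻¹), 0) := by
        simp only [flip]
        rw [dif_neg (by simp [Fin.val_last]), dif_pos (by simp [Fin.val_last])]
      rw [hfl2]
      have e1 : Function.update (Function.update y (σ 0) ⟨(y (σ 0) : ℕ) + 1, hb⟩)
            ((σ * finRotate (d+1)) (Fin.last d))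
            ⟨((Function.update y (σ 0) ⟨(y (σ 0) : ℕ) + 1, hb⟩
                ((σ * finRotate (d+1)) (Fin.last d)) : ℕ)) - 1,
              Nat.lt_of_le_of_lt (Nat.sub_le _ _) (Fin.isLt _)⟩ = y := by
        rw [harg]
        simp only [Function.update_self]
        rw [Function.update_idem]
        have : (⟨((⟨(y (σ 0) : ℕ) + 1, hb⟩ : Fin m) : ℕ) - 1,
            Nat.lt_of_le_of_lt (Nat.sub_le _ _) (Fin.isLt _)⟩ : Fin m) = y (σ 0) := by
          apply Fin.ext
          simp
        rw [this, Function.update_eq_self]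
      have e2 : σ * finRotate (d+1) * (finRotate (d+1))⁻¹ = σ := by group
      rw [e2]
      rw [show (Function.update (Function.update y (σ 0) ⟨(y (σ 0) : ℕ) + 1, hb⟩)
            ((σ * finRotate (d+1)) (Fin.last d)) _ : Fin (d+1) → Fin m) = y from e1]
    · -- not a fixed point
      intro h
      have := congrArg Prod.snd h
      simp only at this
      have := congrArg Fin.val this
      simp [Fin.val_last] at this
  by_cases hl : (t : ℕ) = d + 1
  · -- dropped vertex is the top one
    have ht : t = Fin.last (d+1) := Fin.ext (by rw [hl]; rfl)
    subst ht
    have hpos : (y (σ (Fin.last d)) : ℕ) ≠ 0 := fun h => hnB ⟨rfl, h⟩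
    have hylt : (y (σ (Fin.last d)) : ℕ) < m := (y (σ (Fin.last d))).isLt
    have hflip1 : flip ((y, σ), Fin.last (d+1))
        = ((Function.update y (σ (Fin.last d))
              ⟨(y (σ (Fin.last d)) : ℕ) - 1,
                Nat.lt_of_le_of_lt (Nat.sub_le _ _) (Fin.isLt _)⟩,
            σ * (finRotate (d+1))⁻¹), 0) := by
      simp only [flip]
      rw [dif_neg (by simp [Fin.val_last]), dif_pos (by simp [Fin.val_last])]
    set y2 : Fin (d+1) → Fin m := Function.update y (σ (Fin.last d))
        ⟨(y (σ (Fin.last d)) : ℕ) - 1,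
          Nat.lt_of_le_of_lt (Nat.sub_le _ _) (Fin.isLt _)⟩ with hy2
    set σ2 : Equiv.Perm (Fin (d+1)) := σ * (finRotate (d+1))⁻¹ with hσ2
    have e1 : σ2 0 = σ (Fin.last d) := by
      rw [hσ2, Equiv.Perm.mul_apply, finRotate_symm_zero]
    have e2 : (y2 (σ2 0) : ℕ) = (y (σ (Fin.last d)) : ℕ) - 1 := by
      rw [e1, hy2, Function.update_self]
    have hb2 : (y2 (σ2 0) : ℕ) + 1 < m := by rw [e2]; omega
    have e4 : Function.update y2 (σ2 0) ⟨(y2 (σ2 0) : ℕ) + 1, hb2⟩ = y := by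
      have hv : (⟨(y2 (σ2 0) : ℕ) + 1, hb2⟩ : Fin m) = y (σ (Fin.last d)) := by
        apply Fin.ext
        show (y2 (σ2 0) : ℕ) + 1 = (y (σ (Fin.last d)) : ℕ)
        rw [e2]
        omega
      rw [hv, e1, hy2, Function.update_idem, Function.update_eq_self]
    have e5 : σ2 * finRotate (d+1) = σ := by rw [hσ2]; group
    have hrot := rotimg ℓ y2 σ2 hb2
    rw [e4, e5] at hrot
    rw [hflip1]
    refine ⟨⟨?_, ?_⟩, ?_, ?_⟩
    · show Finset.image _ _ = Finset.range (d+1)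
      rw [← hrot]
      exact hdoor
    · rintro ⟨hc, -⟩
      have := congrArg Fin.val hc
      simp [Fin.val_last] at this
    · have hfl2 : flip ((y2, σ2), (0 : Fin (d+2)))
          = ((Function.update y2 (σ2 0) ⟨(y2 (σ2 0) : ℕ) + 1, hb2⟩,
              σ2 * finRotate (d+1)), Fin.last (d+1)) := by
        simp only [flip]
        rw [dif_pos (show ((0 : Fin (d+2)) : ℕ) = 0 from rfl), dif_pos hb2]
      rw [hfl2, e4, e5]
    · intro h
      have := congrArg (fun q : KS (d+1) m × Fin (d+2) => ((q.2 : ℕ))) h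
      simp [Fin.val_last] at this
  · -- interior vertex dropped
    have htlt : (t : ℕ) < d + 2 := t.isLt
    set s1 : Fin (d+1) := ⟨(t : ℕ) - 1, by omega⟩ with hs1
    set s2 : Fin (d+1) := ⟨(t : ℕ), by omega⟩ with hs2
    have hflip1 : flip ((y, σ), t) = ((y, σ * Equiv.swap s1 s2), t) := by
      simp only [flip]
      rw [dif_neg h0, dif_neg hl]
    have himg := swapimg ℓ y σ s1 s2 (by simp [hs1, hs2]; omega) t rfl
    rw [hflip1]
    refine ⟨⟨?_, ?_⟩, ?_, ?_⟩
    · show Finset.image _ _ = Finset.range (d+1)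
      rw [himg]
      exact hdoor
    · rintro ⟨hc, -⟩
      have hc' : t = Fin.last (d+1) := hc
      exact hl (by rw [hc']; rfl)
    · have hfl2 : flip ((y, σ * Equiv.swap s1 s2), t)
          = ((y, σ * Equiv.swap s1 s2 * Equiv.swap s1 s2), t) := by
        simp only [flip]
        rw [dif_neg h0, dif_neg hl]
      rw [hfl2, mul_assoc, Equiv.swap_mul_self, mul_one]
    · intro h
      have hp : σ * Equiv.swap s1 s2 = σ := congrArg (fun q : KS (d+1) m × Fin (d+2) => q.1.2) h
      have h2 := congrArg (fun τ : Equiv.Perm (Fin (d+1)) => τ s1) hp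
      simp only [Equiv.Perm.mul_apply, Equiv.swap_apply_left] at h2
      have h3 := σ.injective h2
      have hval := congrArg Fin.val h3
      simp only [hs1, hs2] at hval
      omega


end PM
namespace PM

/-- Kuhn's combinatorial lemma (cubical Sperner lemma). -/
theorem kuhn (d m : ℕ) (hm : 0 < m) (ℓ : (Fin d → ℕ) → ℕ)
    (H0 : ∀ x : Fin d → ℕ, (∀ j, x j ≤ m) → ℓ x ≤ d)
    (H1 : ∀ x : Fin d → ℕ, (∀ j, x j ≤ m) → ∀ i : Fin d, x i = 0 → ℓ x ≤ i)
    (H2 : ∀ x : Fin d → ℕ, (∀ j, x j ≤ m) → ∀ i : Fin d, ℓ x = i → x i < m) :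
    Odd (Finset.univ.filter (fun S : KS d m => full ℓ S)).card := by
  induction d with
  | zero =>
    have hall : ∀ S : KS 0 m, full ℓ S := by
      intro S
      show Finset.image (lab ℓ S) Finset.univ = Finset.range 1
      have h0 : lab ℓ S 0 = 0 := Nat.le_zero.1 (H0 _ (vtx_le S 0))
      ext x
      simp only [Finset.mem_image, Finset.mem_range, Finset.mem_univ, true_and]
      constructor
      · rintro ⟨t, rfl⟩
        have ht : t = 0 := Fin.ext (by have := t.isLt; omega)
        rw [ht, h0]
        omega
      · intro hx
        exact ⟨0, by rw [h0]; omega⟩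
    rw [Finset.filter_true_of_mem (fun S _ => hall S), Finset.card_univ]
    have hcard : Fintype.card (KS 0 m) = 1 := by
      rw [Fintype.card_prod]
      simp
    rw [hcard]
    exact odd_one
  | succ d ih =>
    classical
    set ℓ' : (Fin d → ℕ) → ℕ := fun x => ℓ (Fin.snoc x 0) with hℓ'def
    have hsnocbd : ∀ (x : Fin d → ℕ), (∀ j, x j ≤ m) →
        ∀ j, (Fin.snoc x 0 : Fin (d+1) → ℕ) j ≤ m := by
      intro x hx j
      induction j using Fin.lastCases with
      | last => rw [Fin.snoc_last]; exact Nat.zero_le m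
      | cast i => rw [Fin.snoc_castSucc]; exact hx i
    have H0' : ∀ x : Fin d → ℕ, (∀ j, x j ≤ m) → ℓ' x ≤ d := by
      intro x hx
      have := H1 _ (hsnocbd x hx) (Fin.last d) (Fin.snoc_last _ _)
      simpa using this
    have H1' : ∀ x : Fin d → ℕ, (∀ j, x j ≤ m) → ∀ i : Fin d, x i = 0 → ℓ' x ≤ i := by
      intro x hx i hxi
      have := H1 _ (hsnocbd x hx) i.castSucc (by rw [Fin.snoc_castSucc]; exact hxi)
      simpa using this
    have H2' : ∀ x : Fin d → ℕ, (∀ j, x j ≤ m) → ∀ i : Fin d, ℓ' x = i → x i < m := by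
      intro x hx i hi
      have h := H2 _ (hsnocbd x hx) i.castSucc (by simpa using hi)
      rw [Fin.snoc_castSucc] at h
      exact h
    have IH := ih ℓ' H0' H1' H2'
    set D : Finset (KS (d+1) m × Fin (d+2)) :=
      Finset.univ.filter (fun p => door ℓ p.1 p.2) with hD
    set B : Finset (KS (d+1) m × Fin (d+2)) :=
      D.filter (fun p => p.2 = Fin.last (d+1) ∧ (p.1.1 (p.1.2 (Fin.last d)) : ℕ) = 0) with hBdef
    have hBsub : B ⊆ D := Finset.filter_subset _ _
    -- (1) the door count, mod 2, equals the number of full simplices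
    have hDsum : (D.card : ZMod 2) = ((Finset.univ.filter
        (fun S : KS (d+1) m => full ℓ S)).card : ZMod 2) := by
      have e1 : D.card = ∑ S : KS (d+1) m,
          (Finset.univ.filter (fun t => door ℓ S t)).card := by
        rw [hD, Finset.card_filter, ← Finset.univ_product_univ, Finset.sum_product]
        apply Finset.sum_congr rfl
        intro S _
        rw [Finset.card_filter]
      rw [e1]
      push_cast
      calc ∑ S : KS (d+1) m, ((Finset.univ.filter (fun t => door ℓ S t)).card : ZMod 2)
          = ∑ S : KS (d+1) m, (if full ℓ S then (1 : ZMod 2) else 0) :=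
            Finset.sum_congr rfl (fun S _ => doorcount ℓ H0 S)
        _ = ((Finset.univ.filter (fun S : KS (d+1) m => full ℓ S)).card : ZMod 2) := by
            rw [Finset.card_filter]
            push_cast
            apply Finset.sum_congr rfl
            intro S _
            split_ifs <;> simp
    -- (2) the boundary doors biject with full simplices one dimension down
    have hBcard : (Finset.univ.filter (fun T : KS d m => full ℓ' T)).card = B.card := by
      apply Finset.card_bij
        (i := fun T _ => (((Fin.snoc T.1 ⟨0, hm⟩, extPerm T.2) : KS (d+1) m), Fin.last (d+1)))
      · -- maps into B
        intro T hT
        have hfull : full ℓ' T := (Finset.mem_filter.1 hT).2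
        rw [hBdef, Finset.mem_filter]
        refine ⟨?_, rfl, ?_⟩
        · rw [hD, Finset.mem_filter]
          refine ⟨Finset.mem_univ _, ?_⟩
          show Finset.image _ _ = Finset.range (d+1)
          have h := snocimg ℓ hm T.1 T.2
          rw [Prod.mk.eta] at h
          rw [h]
          exact hfull
        · show ((Fin.snoc T.1 ⟨0, hm⟩ : Fin (d+1) → Fin m) ((extPerm T.2) (Fin.last d)) : ℕ) = 0
          rw [extPerm_last, Fin.snoc_last]
      · -- injective
        intro T1 h1 T2 h2 heq
        simp only [Prod.mk.injEq] at heq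
        obtain ⟨⟨hy, hσ⟩, -⟩ := heq
        have hyy : T1.1 = T2.1 := by
          funext i
          have := congrFun hy i.castSucc
          rwa [Fin.snoc_castSucc, Fin.snoc_castSucc] at this
        have hσσ : T1.2 = T2.2 := extPerm_injective hσ
        exact Prod.ext hyy hσσ
      · -- surjective
        intro p hp
        rw [hBdef, Finset.mem_filter] at hp
        obtain ⟨hpD, ht', h0⟩ := hp
        rw [hD, Finset.mem_filter] at hpD
        have hdoor : door ℓ p.1 p.2 := hpD.2
        rw [ht'] at hdoor
        have hfix : p.1.2 (Fin.last d) = Fin.last d := door_last_fix ℓ H1 p.1 hdoor h0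
        obtain ⟨σ, hσ⟩ := exists_extPerm p.1.2 hfix
        set y : Fin d → Fin m := fun i => p.1.1 i.castSucc with hy
        have hlast0 : p.1.1 (Fin.last d) = ⟨0, hm⟩ := by
          apply Fin.ext
          rw [hfix] at h0
          exact h0
        have hbase : Fin.snoc y ⟨0, hm⟩ = p.1.1 := by
          rw [← hlast0]
          exact Fin.snoc_init_self p.1.1
        have hT : full ℓ' ((y, σ) : KS d m) := by
          show Finset.image (lab ℓ' ((y, σ) : KS d m)) Finset.univ = Finset.range (d+1)
          have h := snocimg ℓ hm y σ
          rw [hbase, hσ, Prod.mk.eta] at h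
          rw [← h]
          exact hdoor
        refine ⟨(y, σ), Finset.mem_filter.2 ⟨Finset.mem_univ _, hT⟩, ?_⟩
        rw [hbase, hσ, Prod.mk.eta, ← ht']
      -- (3) the remaining doors pair up
    have hspec : ∀ p ∈ D \ B, (flip p ∈ D \ B) ∧ flip (flip p) = p ∧ flip p ≠ p := by
      intro p hp
      rw [Finset.mem_sdiff] at hp
      obtain ⟨hpD, hpB⟩ := hp
      rw [hD, Finset.mem_filter] at hpD
      have hdoor : door ℓ p.1 p.2 := hpD.2
      have hnB : ¬(p.2 = Fin.last (d+1) ∧ (p.1.1 (p.1.2 (Fin.last d)) : ℕ) = 0) := by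
        intro hcond
        exact hpB (by rw [hBdef, Finset.mem_filter]; exact ⟨by rw [hD, Finset.mem_filter]; exact hpD, hcond⟩)
      obtain ⟨⟨hd2, hn2⟩, hinv, hne⟩ := flip_spec ℓ H1 H2 p hdoor hnB
      refine ⟨?_, hinv, hne⟩
      rw [Finset.mem_sdiff]
      constructor
      · rw [hD, Finset.mem_filter]
        exact ⟨Finset.mem_univ _, hd2⟩
      · intro hmem
        rw [hBdef, Finset.mem_filter] at hmem
        exact hn2 hmem.2
    have hEven : Even ((D \ B).card) :=
      even_card_of_involution (D \ B) flip
        (fun p hp => (hspec p hp).1)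
        (fun p hp => (hspec p hp).2.1)
        (fun p hp => (hspec p hp).2.2)
    -- (4) assemble
    have hcards : (D \ B).card + B.card = D.card :=
      Finset.card_sdiff_add_card_eq_card hBsub
    rw [odd_iff_zmod]
    rw [← hDsum, ← hcards]
    push_cast
    rw [even_zmod hEven, ← hBcard, ← odd_iff_zmod.1 IH]
    rw [zero_add]
end PM

open Set Filter PM

/-- Poincaré–Miranda theorem: if `g : ∏ [aᵢ,bᵢ] → ℝⁿ` is continuous, with `gᵢ > 0`
on the face `xᵢ = aᵢ` and `gᵢ < 0` on the face `xᵢ = bᵢ`, then `g` has a zero in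
the open box `∏ (aᵢ,bᵢ)`. -/
theorem poincare_miranda
    (n : ℕ) (a b : Fin n → ℝ) (hab : ∀ i, a i < b i)
    (g : (Fin n → ℝ) → (Fin n → ℝ))
    (hg : ContinuousOn g (Set.Icc a b))
    (hpos : ∀ i, ∀ x ∈ Set.Icc a b, x i = a i → 0 < g x i)
    (hneg : ∀ i, ∀ x ∈ Set.Icc a b, x i = b i → g x i < 0) :
    ∃ x, (∀ i, x i ∈ Ioo (a i) (b i)) ∧ g x = 0 := by
  classical
  -- Step 1: for every mesh size, find an almost-zero of g with positivity witnesses nearby.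
  have hseq : ∀ M : ℕ, ∃ x ∈ Set.Icc a b, (∀ i, g x i ≤ 0) ∧
      ∀ i : Fin n, ∃ y ∈ Set.Icc a b, dist x y ≤ dist a b / (M+1) ∧ 0 < g y i := by
    intro M
    set m : ℕ := M + 1 with hmdef
    have hm : 0 < m := Nat.succ_pos M
    have hmR : ((m : ℕ) : ℝ) = (M : ℝ) + 1 := by rw [hmdef]; push_cast; ring
    have hmRpos : (0:ℝ) < (m : ℝ) := by rw [hmR]; positivity
    -- grid points
    set pt : (Fin n → ℕ) → (Fin n → ℝ) :=
      fun p i => a i + ((min (p i) m : ℕ) : ℝ) / m * (b i - a i) with hpt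
    have hptIcc : ∀ p, pt p ∈ Set.Icc a b := by
      intro p
      constructor <;> intro i <;> rw [hpt]
      · have h1 : (0:ℝ) ≤ ((min (p i) m : ℕ) : ℝ) / m := by positivity
        nlinarith [(hab i).le]
      · have h1 : ((min (p i) m : ℕ) : ℝ) / m ≤ 1 := by
          rw [div_le_one hmRpos]
          exact_mod_cast Nat.min_le_right (p i) m
        nlinarith [(hab i).le]
    have hpt0 : ∀ p (i : Fin n), p i = 0 → pt p i = a i := by
      intro p i h
      rw [hpt]
      simp [h]
    have hptm : ∀ p (i : Fin n), m ≤ p i → pt p i = b i := by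
      intro p i h
      rw [hpt]
      simp only [min_eq_right h]
      field_simp
      ring
    -- the labelling
    set ℓ : (Fin n → ℕ) → ℕ := fun p =>
      if h : (Finset.univ.filter (fun i => 0 < g (pt p) i)).Nonempty
      then (((Finset.univ.filter (fun i => 0 < g (pt p) i)).min' h : Fin n) : ℕ)
      else n with hℓ
    have H0 : ∀ x : Fin n → ℕ, (∀ j, x j ≤ m) → ℓ x ≤ n := by
      intro x _
      rw [hℓ]
      dsimp only
      split
      · exact (Fin.isLt _).le
      · exact le_rfl
    have H1 : ∀ x : Fin n → ℕ, (∀ j, x j ≤ m) → ∀ i : Fin n, x i = 0 → ℓ x ≤ i := by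
      intro x _ i hxi
      have hgi : 0 < g (pt x) i := hpos i (pt x) (hptIcc x) (hpt0 x i hxi)
      have hmem : i ∈ Finset.univ.filter (fun j => 0 < g (pt x) j) := by
        simp [hgi]
      rw [hℓ]
      dsimp only
      rw [dif_pos ⟨i, hmem⟩]
      exact Finset.min'_le _ i hmem
    have H2 : ∀ x : Fin n → ℕ, (∀ j, x j ≤ m) → ∀ i : Fin n, ℓ x = i → x i < m := by
      intro x _ i hi
      by_contra hge
      push_neg at hge
      have hbx : pt x i = b i := hptm x i hge
      have hneg' : g (pt x) i < 0 := hneg i (pt x) (hptIcc x) hbx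
      rw [hℓ] at hi
      dsimp only at hi
      split at hi
      · next hne =>
        have heq : (Finset.univ.filter (fun j => 0 < g (pt x) j)).min' hne = i :=
          Fin.ext hi
        have hmem := Finset.min'_mem _ hne
        rw [heq] at hmem
        simp only [Finset.mem_filter] at hmem
        linarith [hmem.2]
      · have := i.isLt
        omega
    -- apply the combinatorial lemma
    have hodd := kuhn n m hm ℓ H0 H1 H2
    have hne : (Finset.univ.filter (fun S : KS n m => full ℓ S)).Nonempty := by
      rw [← Finset.card_pos]
      rcases hodd with ⟨k, hk⟩
      omega
    obtain ⟨S, hS⟩ := hne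
    have hfull : full ℓ S := (Finset.mem_filter.1 hS).2
    have hfull' : Finset.image (lab ℓ S) Finset.univ = Finset.range (n+1) := hfull
    -- the vertex labelled n
    have hmemn : n ∈ Finset.image (lab ℓ S) Finset.univ := by
      rw [hfull']
      simp
    obtain ⟨t0, -, ht0⟩ := Finset.mem_image.1 hmemn
    have ht0' : ℓ (vtx S t0) = n := ht0
    have hxneg : ∀ i, g (pt (vtx S t0)) i ≤ 0 := by
      intro i
      rw [hℓ] at ht0'
      dsimp only at ht0'
      split at ht0'
      · exfalso
        have := Fin.isLt ((Finset.univ.filter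
            (fun j => 0 < g (pt (vtx S t0)) j)).min' (by assumption))
        omega
      · next hne' =>
        rw [Finset.not_nonempty_iff_eq_empty, Finset.filter_eq_empty_iff] at hne'
        exact not_lt.1 (hne' (Finset.mem_univ i))
    -- distance between grid vertices
    have hdist : ∀ t t' : Fin (n+1),
        dist (pt (vtx S t)) (pt (vtx S t')) ≤ dist a b / m := by
      intro t t'
      rw [dist_pi_le_iff (by positivity)]
      intro j
      rw [Real.dist_eq]
      have hbj : b j - a j ≤ dist a b := by
        have h := dist_le_pi_dist a b j
        rw [Real.dist_eq, abs_sub_comm, abs_of_nonneg (by linarith [hab j])] at h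
        exact h
      have h1 : vtx S t j ≤ vtx S t' j + 1 ∧ vtx S t' j ≤ vtx S t j + 1 := by
        unfold vtx
        constructor <;> (split <;> split <;> omega)
      have hnat : min (vtx S t j) m ≤ min (vtx S t' j) m + 1 ∧
          min (vtx S t' j) m ≤ min (vtx S t j) m + 1 := by omega
      have hc1 : ((min (vtx S t j) m : ℕ) : ℝ) ≤ ((min (vtx S t' j) m : ℕ) : ℝ) + 1 := by
        exact_mod_cast hnat.1
      have hc2 : ((min (vtx S t' j) m : ℕ) : ℝ) ≤ ((min (vtx S t j) m : ℕ) : ℝ) + 1 := by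
        exact_mod_cast hnat.2
      have heq : pt (vtx S t) j - pt (vtx S t') j
          = (((min (vtx S t j) m : ℕ) : ℝ) - ((min (vtx S t' j) m : ℕ) : ℝ)) / m
              * (b j - a j) := by
        rw [hpt]
        ring
      rw [heq, abs_mul, abs_div]
      have hb0 : (0:ℝ) ≤ b j - a j := by linarith [hab j]
      rw [abs_of_nonneg hb0, abs_of_pos hmRpos]
      have habs : |((min (vtx S t j) m : ℕ) : ℝ) - ((min (vtx S t' j) m : ℕ) : ℝ)| ≤ 1 := by
        rw [abs_le]
        constructor <;> linarith
      calc |((min (vtx S t j) m : ℕ) : ℝ) - ((min (vtx S t' j) m : ℕ) : ℝ)| / m * (b j - a j)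
          ≤ 1 / m * dist a b := by
            apply mul_le_mul
            · rw [div_le_div_iff₀ hmRpos hmRpos]
              nlinarith [habs, hmRpos]
            · linarith
            · exact hb0
            · positivity
        _ = dist a b / m := by ring
    -- positivity witnesses
    refine ⟨pt (vtx S t0), hptIcc _, hxneg, ?_⟩
    intro i
    have hmemi : (i : ℕ) ∈ Finset.image (lab ℓ S) Finset.univ := by
      rw [hfull']
      exact Finset.mem_range.2 (by have := i.isLt; omega)
    obtain ⟨ti, -, hti⟩ := Finset.mem_image.1 hmemi
    have hti' : ℓ (vtx S ti) = i := hti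
    have hgi : 0 < g (pt (vtx S ti)) i := by
      rw [hℓ] at hti'
      dsimp only at hti'
      split at hti'
      · next hne' =>
        have heq : (Finset.univ.filter (fun j => 0 < g (pt (vtx S ti)) j)).min' hne' = i :=
          Fin.ext hti'
        have hmem := Finset.min'_mem _ hne'
        rw [heq] at hmem
        exact (Finset.mem_filter.1 hmem).2
      · exfalso
        have := i.isLt
        omega
    have hd := hdist t0 ti
    rw [hmR] at hd
    exact ⟨pt (vtx S ti), hptIcc _, hd, hgi⟩
  -- Step 2: pass to the limit.
  choose x hxIcc hxneg y hyIcc hydist hypos using hseq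
  have key : ∀ ε > (0:ℝ), ∃ N : ℕ, ∀ M ≥ N, ∀ i, |g (x M) i| ≤ ε := by
    intro ε hε
    have hUC : UniformContinuousOn g (Set.Icc a b) :=
      isCompact_Icc.uniformContinuousOn_of_continuous hg
    rw [Metric.uniformContinuousOn_iff] at hUC
    obtain ⟨δ, hδ, hδprop⟩ := hUC ε hε
    obtain ⟨N, hN⟩ := exists_nat_gt (dist a b / δ)
    refine ⟨N, fun M hM i => ?_⟩
    have hMR : dist a b / ((M:ℝ)+1) < δ := by
      rw [div_lt_iff₀ (by positivity)]
      have h1 : dist a b / δ < (M:ℝ) + 1 := by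
        have : (N:ℝ) ≤ (M:ℝ) := by exact_mod_cast hM
        linarith
      rw [div_lt_iff₀ hδ] at h1
      linarith
    have hdxy : dist (x M) (y M i) < δ := lt_of_le_of_lt (hydist M i) hMR
    have hgxy := hδprop (x M) (hxIcc M) (y M i) (hyIcc M i) hdxy
    have hcoord : |g (x M) i - g (y M i) i| < ε := by
      have h := dist_le_pi_dist (g (x M)) (g (y M i)) i
      rw [Real.dist_eq] at h
      linarith
    rw [abs_le]
    have h1 := hxneg M i
    have h2 := hypos M i
    rw [abs_lt] at hcoord
    constructor <;> linarith
  have hconv : Tendsto (fun M => g (x M)) atTop (nhds 0) := by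
    rw [Metric.tendsto_atTop]
    intro ε hε
    obtain ⟨N, hN⟩ := key (ε/2) (by positivity)
    refine ⟨N, fun M hM => ?_⟩
    have hle : dist (g (x M)) 0 ≤ ε/2 := by
      rw [dist_pi_le_iff (by positivity)]
      intro i
      rw [Real.dist_eq, Pi.zero_apply, sub_zero]
      exact hN M hM i
    linarith
  obtain ⟨xlim, hxlim, φ, hφmono, hφconv⟩ := isCompact_Icc.tendsto_subseq hxIcc
  have hgx : Tendsto (fun k => g (x (φ k))) atTop (nhds (g xlim)) := by
    have hcw : ContinuousWithinAt g (Set.Icc a b) xlim := hg xlim hxlim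
    apply hcw.tendsto.comp
    rw [tendsto_nhdsWithin_iff]
    exact ⟨hφconv, Filter.Eventually.of_forall (fun k => hxIcc _)⟩
  have hgx0 : Tendsto (fun k => g (x (φ k))) atTop (nhds 0) :=
    hconv.comp hφmono.tendsto_atTop
  have hzero : g xlim = 0 := tendsto_nhds_unique hgx hgx0
  refine ⟨xlim, fun i => ?_, hzero⟩
  constructor
  · rcases lt_or_eq_of_le (hxlim.1 i) with h | h
    · exact h
    · exfalso
      have := hpos i xlim hxlim h.symm
      rw [hzero] at this
      simp at this
  · rcases lt_or_eq_of_le (hxlim.2 i) with h | h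
    · exact h
    · exfalso
      have := hneg i xlim hxlim h
      rw [hzero] at this
      simp at this
end
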